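/- arXiv:0911.5726 — 6 statements merged into one kernel-verified Lean document; each statement's English description precedes it below -/
import Mathlib

section
/- Let $L$ be a field, $n \ge 1$, and $I \subset \{0, 1, \dots, n\}$ a subset with $i = |I|$ elements. Suppose $Q \in L[x]$ is a polynomial of degree at most $n + 1 - i$ and $a_j \in L$ for $j \in I$ satisfy the polynomial identity $Q(x)\,(1+x)^i = \sum_{j \in I} a_j x^j$. Then $Q = 0$ (and all $a_j = 0$). -/
open Polynomial

private lemma support_X_mul' {L : Type*} [Field L] (R : L[X]) :
    (X * R).support = R.support.image (· + 1) := by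
  ext k
  cases k with
  | zero =>
    simp [mem_support_iff, coeff_X_mul_zero]
  | succ m =>
    simp only [mem_support_iff, coeff_X_mul, Finset.mem_image]
    constructor
    · intro hc; exact ⟨m, hc, rfl⟩
    · rintro ⟨b, hb, hbm⟩
      obtain rfl : b = m := by omega
      exact hb

private lemma sparse_mult {L : Type*} [Field L] [CharZero L] :
    ∀ d (P : L[X]), P.natDegree ≤ d → P ≠ 0 →
      P.rootMultiplicity (-1) < P.support.card := by
  intro d
  induction d with
  | zero =>
    intro P hd hP
    have hcard : 0 < P.support.card := Finset.card_pos.2 (nonempty_support_iff.2 hP)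
    have : P = C (P.coeff 0) := eq_C_of_natDegree_le_zero hd
    have hroot : ¬ P.IsRoot (-1) := by
      rw [this]
      simp only [IsRoot, eval_C]
      intro h0
      exact hP (by rw [this, h0, map_zero])
    rw [rootMultiplicity_eq_zero hroot]
    exact hcard
  | succ d ih =>
    intro P hd hP
    by_cases hr : P.rootMultiplicity (-1) = 0
    · rw [hr]
      exact Finset.card_pos.2 (nonempty_support_iff.2 hP)
    have hroot : P.IsRoot (-1) := by
      by_contra hc
      exact hr (rootMultiplicity_eq_zero hc)
    by_cases h0 : P.coeff 0 = 0
    · -- P = X * divX P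
      obtain ⟨R, hPeq⟩ : ∃ R, P = X * R := by
        refine ⟨P.divX, ?_⟩
        conv_lhs => rw [← X_mul_divX_add P]
        rw [h0, map_zero, add_zero]
      subst hPeq
      have hR : R ≠ 0 := by
        intro hc
        exact hP (by rw [hc, mul_zero])
      have hndeg : R.natDegree ≤ d := by
        have : (X * R).natDegree = 1 + R.natDegree := by
          rw [natDegree_mul X_ne_zero hR, natDegree_X]
        omega
      have hrm : (X * R).rootMultiplicity (-1) = R.rootMultiplicity (-1) := by
        rw [rootMultiplicity_mul hP]
        have : rootMultiplicity (-1) (X : L[X]) = 0 :=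
          rootMultiplicity_eq_zero (by simp [IsRoot])
        rw [this, zero_add]
      have hsupp : (X * R).support.card = R.support.card := by
        rw [support_X_mul', Finset.card_image_of_injective _ (add_left_injective 1)]
      rw [hrm, hsupp]
      exact ih _ hndeg hR
    · -- constant coefficient nonzero; use derivative
      have hnd : P.natDegree ≠ 0 := by
        intro hc
        have := eq_C_of_natDegree_le_zero hc.le
        rw [this] at hroot
        simp only [IsRoot, eval_C] at hroot
        exact h0 (by rw [this, hroot]; simp)
      have hP' : derivative P ≠ 0 := by
        intro hc
        exact hnd (natDegree_eq_zero_of_derivative_eq_zero hc)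
      have hndeg : (derivative P).natDegree ≤ d := by
        have := natDegree_derivative_lt hnd
        omega
      have hrm : (derivative P).rootMultiplicity (-1) = P.rootMultiplicity (-1) - 1 :=
        derivative_rootMultiplicity_of_root hroot
      have hsub : (derivative P).support ⊆ (P.support.erase 0).image (· - 1) := by
        intro k hk
        rw [mem_support_iff, coeff_derivative] at hk
        have h1 : P.coeff (k + 1) ≠ 0 := by
          intro hc; rw [hc] at hk; simp at hk
        refine Finset.mem_image.2 ⟨k + 1, ?_, by omega⟩
        exact Finset.mem_erase.2 ⟨by omega, mem_support_iff.2 h1⟩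
      have h0mem : (0 : ℕ) ∈ P.support := mem_support_iff.2 h0
      have hcard : (derivative P).support.card ≤ P.support.card - 1 :=
        le_trans (Finset.card_le_card hsub)
          (le_trans (Finset.card_image_le) (by rw [Finset.card_erase_of_mem h0mem]))
      have hIH := ih _ hndeg hP'
      have hrpos : 1 ≤ P.rootMultiplicity (-1) := Nat.one_le_iff_ne_zero.2 hr
      have hcardpos : 1 ≤ P.support.card := Finset.card_pos.2 ⟨0, h0mem⟩
      omega

/-- Over a field `L` of characteristic zero, if `I ⊆ {0,…,n}` has `i`
elements, `Q` has degree at most `n+1-i`, and `Q(x)(1+x)^i = ∑_{j∈I} a_j x^j`,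
then `Q = 0` and all `a_j = 0`. -/
theorem stmt_3 {L : Type*} [Field L] [CharZero L] {n : ℕ} (hn : 1 ≤ n)
    (I : Finset ℕ) (hI : ∀ j ∈ I, j ≤ n)
    (Q : L[X]) (hQ : Q.natDegree ≤ n + 1 - I.card) (a : ℕ → L)
    (h : Q * (1 + X) ^ I.card = ∑ j ∈ I, C (a j) * X ^ j) :
    Q = 0 ∧ ∀ j ∈ I, a j = 0 := by
  have hQ0 : Q = 0 := by
    by_contra hQne
    set S : L[X] := ∑ j ∈ I, C (a j) * X ^ j with hS
    have hPne : S ≠ 0 := by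
      rw [← h]
      apply mul_ne_zero hQne
      apply pow_ne_zero
      intro hc
      have := congrArg (eval 0) hc
      simp at this
    -- rootMultiplicity at -1 is at least card I
    have hdvd : (X - C (-1 : L)) ^ I.card ∣ S := by
      have heq : (X - C (-1 : L)) = 1 + X := by
        rw [map_neg, map_one, sub_neg_eq_add, add_comm]
      rw [heq, ← h]
      exact Dvd.intro_left _ rfl
    have hrm : I.card ≤ S.rootMultiplicity (-1) :=
      (le_rootMultiplicity_iff hPne).2 hdvd
    -- support of S is contained in I
    have hsupp : S.support ⊆ I := by
      intro k hk
      rw [mem_support_iff] at hk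
      by_contra hkI
      apply hk
      rw [hS, finset_sum_coeff]
      apply Finset.sum_eq_zero
      intro j hj
      rw [coeff_C_mul, coeff_X_pow]
      have : k ≠ j := fun hc => hkI (hc ▸ hj)
      simp [this]
    have hcard : S.support.card ≤ I.card := Finset.card_le_card hsupp
    have := sparse_mult S.natDegree S le_rfl hPne
    omega
  refine ⟨hQ0, fun j hj => ?_⟩
  rw [hQ0, zero_mul] at h
  have := congrArg (fun p => coeff p j) h
  simp only [coeff_zero, finset_sum_coeff, coeff_C_mul, coeff_X_pow] at this
  rw [Finset.sum_eq_single j (fun b _ hb => by simp [Ne.symm hb]) (fun hc => absurd hj hc)] at this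
  simpa using this.symm
end

section
/- Let $n = 2k$ be even and let $X_1, \dots, X_k$ be indeterminates. Consider the sequence $s = (X_1, \dots, X_k, X_k^{-1}, \dots, X_1^{-1})$ of $n$ elements of the field of rational functions $\mathbb{Q}(X_1,\dots,X_k)$. Then any permutation $s' = (s_{\sigma^{-1}(1)}, \dots, s_{\sigma^{-1}(n)})$ of $s$ whose first $k$ terms do not contain both some $X_i$ and its inverse $X_i^{-1}$ is regular, in the sense that for each $1 \le j \le n$, the partial product $s'_1 s'_2 \cdots s'_j$ is a simple root of the polynomial $\prod_{I \subset \{1,\dots,n\},\ |I| = j} (T - \prod_{i \in I} s'_i)$. In particular, there are at least $2^k k!$ regular permutations of $s$. -/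
/-- A sequence `φ_1, …, φ_n` of elements of a field is regular if for each `1 ≤ j ≤ n`
the partial product `φ_1 ⋯ φ_j` is a simple root of `∏_{|I| = j} (T - ∏_{i ∈ I} φ_i)`,
i.e. arises from exactly one `j`-element subset `I ⊆ {1,…,n}`. -/
def IsRegularSeq {L : Type*} [Field L] {n : ℕ} (φ : Fin n → L) : Prop :=
  ∀ j : ℕ, 1 ≤ j → j ≤ n →
    Set.ncard {I : Finset (Fin n) | I.card = j ∧
      (∏ i ∈ I, φ i) = ∏ i ∈ Finset.univ.filter (fun i : Fin n => (i : ℕ) < j), φ i} = 1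

/-- The sequence `s = (X_1, …, X_k, X_k⁻¹, …, X_1⁻¹)` in `ℚ(X_1, …, X_k)`. -/
noncomputable def mirrorSeq (k : ℕ) :
    Fin (2 * k) → FractionRing (MvPolynomial (Fin k) ℚ) := fun j =>
  if h : (j : ℕ) < k then
    algebraMap (MvPolynomial (Fin k) ℚ) _ (MvPolynomial.X ⟨(j : ℕ), h⟩)
  else
    (algebraMap (MvPolynomial (Fin k) ℚ) _
      (MvPolynomial.X ⟨2 * k - 1 - (j : ℕ), by have := j.isLt; omega⟩))⁻¹

/-!
Index the sequence by pairs `(a, b) : α × Bool`, with `(a, false) ↦ x a` and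
`(a, true) ↦ (x a)⁻¹`. The product over a set `J` of indices is the Laurent monomial
`∏ a, x a ^ e_J a` with `e_J a = [(a, false) ∈ J] - [(a, true) ∈ J]`, and for multiplicatively
independent `x a` (such as the variables of `ℚ(X_1, …, X_k)`) it determines `e_J`. If `J₀`
contains no complete pair, every `J` with `e_J = e_{J₀}` contains `J₀`; if `J₀` meets every pair,
every such `J` lies in `J₀`; either way `|J| = |J₀|` forces `J = J₀`. If the first `k` terms
contain no complete pair, they meet each of the `k` pairs exactly once, so shorter initial
segments contain no complete pair and longer ones meet every pair. Choosing the order of the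
pairs and which member of each pair goes into the first half gives `2^k k!` such orderings.
-/

open Finset MvPolynomial

section PairSequence

variable {G : Type*} [CommGroup G] {α : Type*} [DecidableEq α]

def pairSeq (x : α → G) (p : α × Bool) : G := if p.2 then (x p.1)⁻¹ else x p.1

def pairExponent (J : Finset (α × Bool)) (a : α) : ℤ :=
  (if (a, false) ∈ J then 1 else 0) - (if (a, true) ∈ J then 1 else 0)

theorem prod_pairSeq [Fintype α] (x : α → G) (J : Finset (α × Bool)) :
    ∏ p ∈ J, pairSeq x p = ∏ a, x a ^ pairExponent J a := by
  rw [← Fintype.prod_ite_mem, Fintype.prod_prod_type]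
  refine prod_congr rfl fun a _ => ?_
  rw [Fintype.prod_bool]
  simp only [pairSeq, pairExponent, Bool.false_eq_true, ↓reduceIte]
  split_ifs <;> simp

theorem subset_of_pairExponent_eq_of_exists_notMem {J J₀ : Finset (α × Bool)}
    (h₀ : ∀ a, ∃ b, (a, b) ∉ J₀) (he : pairExponent J = pairExponent J₀) : J₀ ⊆ J := by
  rintro ⟨a, b⟩ hab
  obtain ⟨b', hb'⟩ := h₀ a
  have hea := congrFun he a
  simp only [pairExponent] at hea
  cases b <;> cases b' <;> split_ifs at hea <;> simp_all

theorem subset_of_pairExponent_eq_of_exists_mem {J J₀ : Finset (α × Bool)}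
    (h₀ : ∀ a, ∃ b, (a, b) ∈ J₀) (he : pairExponent J = pairExponent J₀) : J ⊆ J₀ := by
  rintro ⟨a, b⟩ hab
  obtain ⟨b', hb'⟩ := h₀ a
  have hea := congrFun he a
  simp only [pairExponent] at hea
  cases b <;> cases b' <;> split_ifs at hea <;> simp_all

theorem eq_of_prod_pairSeq_eq [Fintype α] {x : α → G}
    (hx : Function.Injective fun e : α → ℤ => ∏ a, x a ^ e a) {J J₀ : Finset (α × Bool)}
    (h₀ : (∀ a, ∃ b, (a, b) ∉ J₀) ∨ ∀ a, ∃ b, (a, b) ∈ J₀)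
    (hc : J.card = J₀.card) (hp : ∏ p ∈ J, pairSeq x p = ∏ p ∈ J₀, pairSeq x p) : J = J₀ := by
  have he : pairExponent J = pairExponent J₀ := hx (by simpa only [prod_pairSeq] using hp)
  rcases h₀ with h₀ | h₀
  · exact (eq_of_subset_of_card_le (subset_of_pairExponent_eq_of_exists_notMem h₀ he) hc.le).symm
  · exact eq_of_subset_of_card_le (subset_of_pairExponent_eq_of_exists_mem h₀ he) hc.ge

end PairSequence

section RegularSequence

variable {ι : Type*} [Fintype ι] {n : ℕ}

theorem map_symm_filter_val_lt (τ : ι ≃ Fin n) (j : ℕ) :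
    (univ.filter fun i : Fin n => (i : ℕ) < j).map τ.symm.toEmbedding =
      univ.filter fun i => (τ i : ℕ) < j := by
  ext; simp

theorem card_filter_equiv_lt (τ : ι ≃ Fin n) {j : ℕ} (hj : j ≤ n) :
    (univ.filter fun i => (τ i : ℕ) < j).card = j := by
  rw [← map_symm_filter_val_lt, card_map, Fin.card_filter_val_lt, min_eq_right hj]

theorem isRegularSeq_comp_symm {L : Type*} [Field L] (φ : ι → L) (τ : ι ≃ Fin n)
    (h : ∀ j ≤ n, ∀ J : Finset ι, J.card = j →
      ∏ i ∈ J, φ i = ∏ i ∈ univ.filter (fun i => (τ i : ℕ) < j), φ i →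
        J = univ.filter fun i => (τ i : ℕ) < j) :
    IsRegularSeq fun j => φ (τ.symm j) := by
  intro j _ hj
  rw [Set.ncard_eq_one]
  refine ⟨univ.filter fun i : Fin n => (i : ℕ) < j,
    Set.eq_singleton_iff_unique_mem.2 ⟨⟨?_, rfl⟩, ?_⟩⟩
  · rw [Fin.card_filter_val_lt, min_eq_right hj]
  rintro I ⟨hI, hprod⟩
  rw [← map_inj (f := τ.symm.toEmbedding), map_symm_filter_val_lt]
  refine h j hj _ (by rw [card_map, hI]) ?_
  rw [← map_symm_filter_val_lt, prod_map, prod_map]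
  exact hprod

end RegularSequence

section PairOrdering

variable {α : Type*} [Fintype α] {n : ℕ}

theorem exists_lt_card_of_forall_not_and (τ : α × Bool ≃ Fin n)
    (hτ : ∀ a, ¬((τ (a, false) : ℕ) < Fintype.card α ∧ (τ (a, true) : ℕ) < Fintype.card α))
    (a : α) : ∃ b, (τ (a, b) : ℕ) < Fintype.card α := by
  classical
  set S := univ.filter fun p => (τ p : ℕ) < Fintype.card α
  have hn : Fintype.card α ≤ n := by
    have := Fintype.card_congr τ
    simp only [Fintype.card_prod, Fintype.card_bool, Fintype.card_fin] at this
    omega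
  have hinj : Set.InjOn Prod.fst (S : Set (α × Bool)) := by
    rintro ⟨a, b⟩ hp ⟨a', b'⟩ hq (rfl : a = a')
    simp only [S, mem_coe, mem_filter, mem_univ, true_and] at hp hq
    cases b <;> cases b' <;> first | rfl | exact absurd ⟨‹_›, ‹_›⟩ (hτ a)
  have himage : S.image Prod.fst = univ :=
    eq_univ_of_card _ (by rw [card_image_of_injOn hinj, card_filter_equiv_lt τ hn])
  obtain ⟨p, hp, rfl⟩ := mem_image.1 (himage ▸ mem_univ a)
  exact ⟨p.2, (mem_filter.1 hp).2⟩

theorem isRegularSeq_pairSeq {L : Type*} [Field L] [DecidableEq α] {x : α → Lˣ}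
    (hx : Function.Injective fun e : α → ℤ => ∏ a, x a ^ e a) (τ : α × Bool ≃ Fin n)
    (hτ : ∀ a, ¬((τ (a, false) : ℕ) < Fintype.card α ∧ (τ (a, true) : ℕ) < Fintype.card α)) :
    IsRegularSeq fun j => ((pairSeq x (τ.symm j) : Lˣ) : L) := by
  refine isRegularSeq_comp_symm (fun p => ((pairSeq x p : Lˣ) : L)) τ fun j hj J hJ hprod => ?_
  refine eq_of_prod_pairSeq_eq hx ?_ (hJ.trans (card_filter_equiv_lt τ hj).symm) ?_
  · rcases le_total j (Fintype.card α) with hjα | hjα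
    · refine Or.inl fun a => ?_
      by_contra! h
      simp only [mem_filter, mem_univ, true_and] at h
      exact hτ a ⟨(h false).trans_le hjα, (h true).trans_le hjα⟩
    · refine Or.inr fun a => ?_
      obtain ⟨b, hb⟩ := exists_lt_card_of_forall_not_and τ hτ a
      exact ⟨b, mem_filter.2 ⟨mem_univ _, hb.trans_le hjα⟩⟩
  · exact_mod_cast hprod

end PairOrdering

section Monomials

variable {σ R : Type*} [Fintype σ] [CommRing R]

theorem injective_prod_X_pow [Nontrivial R] :
    Function.Injective fun m : σ → ℕ => ∏ a, (X a : MvPolynomial σ R) ^ m a := by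
  intro m m' h
  simp only [prod_X_pow, monomial_left_inj one_ne_zero] at h
  funext a
  simpa only [Finsupp.indicator_of_mem (mem_univ a)] using DFunLike.congr_fun h a

variable [IsDomain R]

theorem injective_prod_zpow_algebraMap_X :
    Function.Injective fun e : σ → ℤ =>
      ∏ a, algebraMap (MvPolynomial σ R) (FractionRing (MvPolynomial σ R)) (X a) ^ e a := by
  intro e d h
  beta_reduce at h
  set Y : σ → FractionRing (MvPolynomial σ R) := fun a => algebraMap (MvPolynomial σ R) _ (X a)
  have hY : ∀ a, Y a ≠ 0 := fun a =>
    (map_ne_zero_iff _ (IsFractionRing.injective (MvPolynomial σ R) _)).2 (X_ne_zero a)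
  -- shifting all exponents by `m` makes them natural numbers
  have shift : ∀ (e : σ → ℤ) (m : σ → ℕ), (∀ a, 0 ≤ e a + m a) →
      (∏ a, Y a ^ e a) * ∏ a, Y a ^ m a =
        algebraMap _ _ (∏ a, (X a : MvPolynomial σ R) ^ (e a + m a).toNat) := by
    intro e m hm
    rw [map_prod, ← prod_mul_distrib]
    refine prod_congr rfl fun a _ => ?_
    rw [map_pow, ← zpow_natCast, ← zpow_natCast, ← zpow_add₀ (hY a), Int.toNat_of_nonneg (hm a)]
  set m : σ → ℕ := fun a => (e a).natAbs + (d a).natAbs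
  have he : ∀ a, 0 ≤ e a + m a := fun a => by simp only [m]; omega
  have hd : ∀ a, 0 ≤ d a + m a := fun a => by simp only [m]; omega
  have hprod : (∏ a, Y a ^ e a) * ∏ a, Y a ^ m a = (∏ a, Y a ^ d a) * ∏ a, Y a ^ m a := by
    rw [h]
  rw [shift e m he, shift d m hd] at hprod
  have hexp := congrFun (injective_prod_X_pow (IsFractionRing.injective _ _ hprod))
  funext a
  have := hexp a
  have := he a
  have := hd a
  omega

end Monomials

section Mirror

variable {k : ℕ}

def mirrorEquiv (k : ℕ) : Fin k × Bool ≃ Fin (2 * k) :=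
  (Equiv.prodComm _ _).trans <| (Equiv.boolProdEquivSum _).trans <|
    (Equiv.sumCongr (Equiv.refl _) Fin.revPerm).trans <| finSumFinEquiv.trans <|
      finCongr (two_mul k).symm

theorem mirrorEquiv_false (a : Fin k) : mirrorEquiv k (a, false) = ⟨a, by omega⟩ := by
  ext; simp [mirrorEquiv]

theorem mirrorEquiv_true (a : Fin k) : mirrorEquiv k (a, true) = ⟨2 * k - 1 - a, by omega⟩ := by
  ext; simp [mirrorEquiv]; omega

theorem val_mirrorEquiv_lt_iff (p : Fin k × Bool) : (mirrorEquiv k p : ℕ) < k ↔ p.2 = false := by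
  obtain ⟨a, _ | _⟩ := p <;> simp [mirrorEquiv_false, mirrorEquiv_true]
  omega

noncomputable def mirrorUnit (k : ℕ) (a : Fin k) : (FractionRing (MvPolynomial (Fin k) ℚ))ˣ :=
  Units.mk0 _ <| (map_ne_zero_iff _ (IsFractionRing.injective (MvPolynomial (Fin k) ℚ) _)).2
    (X_ne_zero (R := ℚ) a)

theorem injective_prod_zpow_mirrorUnit :
    Function.Injective fun e : Fin k → ℤ => ∏ a, mirrorUnit k a ^ e a := by
  intro e d h
  apply injective_prod_zpow_algebraMap_X (R := ℚ)
  simpa [mirrorUnit] using congrArg Units.val h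

theorem mirrorSeq_mirrorEquiv (p : Fin k × Bool) :
    mirrorSeq k (mirrorEquiv k p) = pairSeq (mirrorUnit k) p := by
  obtain ⟨a, _ | _⟩ := p
  · simp [mirrorSeq, pairSeq, mirrorEquiv_false, mirrorUnit]
  · have hlt : ¬2 * k - 1 - (a : ℕ) < k := by omega
    simp only [mirrorSeq, pairSeq, mirrorEquiv_true, mirrorUnit, dif_neg hlt]
    simp only [↓reduceIte, Units.val_inv_eq_inv_val, Units.val_mk0]
    congr
    omega

theorem isRegularSeq_mirrorSeq_perm (σ : Equiv.Perm (Fin (2 * k)))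
    (hσ : ∀ a, ¬((σ (mirrorEquiv k (a, false)) : ℕ) < k ∧ (σ (mirrorEquiv k (a, true)) : ℕ) < k)) :
    IsRegularSeq fun j => mirrorSeq k (σ⁻¹ j) := by
  convert isRegularSeq_pairSeq injective_prod_zpow_mirrorUnit ((mirrorEquiv k).trans σ)
    (by simpa using hσ) using 2 with j
  rw [Equiv.symm_trans_apply, ← mirrorSeq_mirrorEquiv, Equiv.apply_symm_apply, Equiv.Perm.inv_def]

def signedPerm (s : Fin k → Bool) (π : Equiv.Perm (Fin k)) : Equiv.Perm (Fin (2 * k)) :=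
  (mirrorEquiv k).permCongr <|
    Equiv.prodShear π fun a => if s a then Equiv.boolNot else Equiv.refl Bool

theorem signedPerm_mirrorEquiv (s : Fin k → Bool) (π : Equiv.Perm (Fin k)) (p : Fin k × Bool) :
    signedPerm s π (mirrorEquiv k p) = mirrorEquiv k (π p.1, xor (s p.1) p.2) := by
  cases h : s p.1 <;> simp [signedPerm, Equiv.prodShear, h]

theorem injective_signedPerm :
    Function.Injective fun p : (Fin k → Bool) × Equiv.Perm (Fin k) => signedPerm p.1 p.2 := by
  rintro ⟨s, π⟩ ⟨s', π'⟩ h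
  have hpair : ∀ a, (π a, s a) = (π' a, s' a) := fun a => by
    simpa [signedPerm_mirrorEquiv] using congrArg (fun τ => τ (mirrorEquiv k (a, false))) h
  exact Prod.ext (funext fun a => (Prod.mk.inj (hpair a)).2)
    (Equiv.ext fun a => (Prod.mk.inj (hpair a)).1)

theorem signedPerm_not_lt_and_lt (s : Fin k → Bool) (π : Equiv.Perm (Fin k)) (a : Fin k) :
    ¬((signedPerm s π (mirrorEquiv k (a, false)) : ℕ) < k ∧
      (signedPerm s π (mirrorEquiv k (a, true)) : ℕ) < k) := by
  simp [signedPerm_mirrorEquiv, val_mirrorEquiv_lt_iff]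

theorem pow_mul_factorial_le_ncard_isRegularSeq :
    2 ^ k * k.factorial ≤
      Set.ncard {σ : Equiv.Perm (Fin (2 * k)) | IsRegularSeq fun j => mirrorSeq k (σ⁻¹ j)} :=
  calc 2 ^ k * k.factorial = Nat.card ((Fin k → Bool) × Equiv.Perm (Fin k)) := by
        simp [Fintype.card_perm]
    _ = (Set.range fun p : (Fin k → Bool) × Equiv.Perm (Fin k) => signedPerm p.1 p.2).ncard :=
        (Set.ncard_range_of_injective injective_signedPerm).symm
    _ ≤ _ := Set.ncard_le_ncard (Set.range_subset_iff.2 fun p =>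
        isRegularSeq_mirrorSeq_perm _ (signedPerm_not_lt_and_lt p.1 p.2))

end Mirror

/-- Any permutation of `s = (X_1, …, X_k, X_k⁻¹, …, X_1⁻¹)` whose first
`k` terms do not contain both some `X_i` and its inverse is regular; in particular there
are at least `2^k k!` regular permutations of `s`. -/
theorem stmt_5 (k : ℕ) :
    (∀ σ : Equiv.Perm (Fin (2 * k)),
      (∀ i : Fin k,
        ¬(((σ ⟨(i : ℕ), by have := i.isLt; omega⟩ : Fin (2 * k)) : ℕ) < k ∧
          ((σ ⟨2 * k - 1 - (i : ℕ), by have := i.isLt; omega⟩ : Fin (2 * k)) : ℕ) < k)) →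
      IsRegularSeq (fun j => mirrorSeq k (σ⁻¹ j))) ∧
    2 ^ k * Nat.factorial k ≤
      Set.ncard {σ : Equiv.Perm (Fin (2 * k)) |
        IsRegularSeq (fun j => mirrorSeq k (σ⁻¹ j))} :=
  ⟨fun σ hσ => isRegularSeq_mirrorSeq_perm σ (by simpa only [mirrorEquiv_false, mirrorEquiv_true]),
    pow_mul_factorial_le_ncard_isRegularSeq⟩
end

section
/- Let $A$ be a complete local Noetherian ring with maximal ideal $\mathfrak{m}$, and let $\{a_i : i \in I\}$ be a family of proper ideals of $A$, each of finite colength (i.e. $A/a_i$ has finite length), such that $\bigcap_{i \in I} a_i = 0$. Then the linear topology on $A$ defined by the family $\{a_i\}$ (having the finite intersections of the $a_i$ as a fundamental system of neighborhoods of $0$) coincides with the $\mathfrak{m}$-adic topology. In particular, for every $n \ge 1$ there exist finitely many indices $i_1, \dots, i_r \in I$ with $a_{i_1} \cap \dots \cap a_{i_r} \subset \mathfrak{m}^n$. -/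
open IsLocalRing Submodule

section Aux

variable {A : Type*} [CommRing A] [IsLocalRing A]

private lemma chev_simple : IsSimpleModule A (A ⧸ (maximalIdeal A : Ideal A)) :=
  isSimpleModule_iff_isCoatom.mpr (Ideal.isMaximal_def.mp (maximalIdeal.isMaximal A))

private lemma chev_artinian_of_fg_of_smul_eq_bot
    {M : Type*} [AddCommGroup M] [Module A M] [Module.Finite A M]
    (h : (maximalIdeal A) • (⊤ : Submodule A M) = ⊥) : IsArtinian A M := by
  have hsimple : IsSimpleModule A (A ⧸ (maximalIdeal A : Ideal A)) := chev_simple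
  have hart : IsArtinian A (A ⧸ (maximalIdeal A : Ideal A)) := inferInstance
  have hx : ∀ x : M, IsArtinian A (Submodule.span A {x} : Submodule A M) := by
    intro x
    have hker : (maximalIdeal A : Submodule A A) ≤
        LinearMap.ker (LinearMap.toSpanSingleton A M x) := by
      intro r hr
      have : r • x ∈ (maximalIdeal A) • (⊤ : Submodule A M) :=
        Submodule.smul_mem_smul hr Submodule.mem_top
      rw [h] at this
      simpa [LinearMap.mem_ker] using this
    have hr := Submodule.range_liftQ (maximalIdeal A : Submodule A A)
      (LinearMap.toSpanSingleton A M x) hker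
    have h2 : (Submodule.span A {x} : Submodule A M) =
        LinearMap.range (Submodule.liftQ (maximalIdeal A : Submodule A A)
          (LinearMap.toSpanSingleton A M x) hker) :=
      (LinearMap.span_singleton_eq_range A M x).trans hr.symm
    rw [h2]
    exact isArtinian_range _
  obtain ⟨s, hs⟩ := Module.Finite.fg_top (R := A) (M := M)
  haveI : Finite (↑(↑s : Set M)) := s.finite_toSet.to_subtype
  have htop : (⊤ : Submodule A M) = ⨆ x : (s : Set M), Submodule.span A {(x : M)} := by
    rw [← hs, Submodule.span_eq_iSup_of_singleton_spans, iSup_subtype']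
  have : IsArtinian A (⊤ : Submodule A M) := by
    rw [htop]
    exact isArtinian_iSup
  exact isArtinian_of_linearEquiv (Submodule.topEquiv (R := A) (M := M))

variable [IsNoetherianRing A]

private lemma chev_artinian_quot_pow (k : ℕ) :
    IsArtinian A (A ⧸ (maximalIdeal A ^ k : Ideal A)) := by
  induction k with
  | zero =>
    have : Subsingleton (A ⧸ (maximalIdeal A ^ 0 : Ideal A)) := by
      rw [pow_zero, Ideal.one_eq_top]
      exact Submodule.Quotient.subsingleton_iff.mpr rfl
    infer_instance
  | succ k ih =>
    set N : Submodule A A := (maximalIdeal A ^ (k + 1) : Ideal A)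
    set T : Submodule A A := (maximalIdeal A ^ k : Ideal A)
    have hNT : N ≤ T := Ideal.pow_le_pow_right (Nat.le_succ k)
    rw [isArtinian_iff_submodule_quotient (T.map N.mkQ)]
    constructor
    · -- the submodule `m^k/m^(k+1)` is f.g. and killed by `m`
      have : Module.Finite A (T.map N.mkQ) := by
        have : IsNoetherian A (A ⧸ N) := inferInstance
        exact Module.Finite.iff_fg.mpr (IsNoetherian.noetherian _)
      refine chev_artinian_of_fg_of_smul_eq_bot ?_
      rw [eq_bot_iff]
      refine Submodule.smul_le.mpr ?_
      rintro r hr ⟨y, hy⟩ _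
      obtain ⟨z, hz, rfl⟩ := hy
      have hmem : r • z ∈ N := by
        have : r • z ∈ (maximalIdeal A) * (maximalIdeal A ^ k) :=
          Ideal.mul_mem_mul hr hz
        rwa [← pow_succ'] at this
      rw [Submodule.mem_bot]
      refine Subtype.ext ?_
      show r • N.mkQ z = 0
      rw [← map_smul, Submodule.mkQ_apply, Submodule.Quotient.mk_eq_zero]
      exact hmem
    · exact isArtinian_of_linearEquiv
        (Submodule.quotientQuotientEquivQuotient N T hNT).symm

/-- Krull intersection, quotient form. -/
private lemma chev_krull (J : Ideal A) : (⨅ k : ℕ, (J ⊔ maximalIdeal A ^ k)) ≤ J := by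
  intro x hx
  have hbot : (⨅ i : ℕ, (maximalIdeal A) ^ i • ⊤ : Submodule A (A ⧸ (J : Submodule A A))) = ⊥ :=
    Ideal.iInf_pow_smul_eq_bot_of_isLocalRing _ (maximalIdeal.isMaximal A).ne_top
  have hmem : ∀ k : ℕ, (J : Submodule A A).mkQ x ∈
      ((maximalIdeal A) ^ k • ⊤ : Submodule A (A ⧸ (J : Submodule A A))) := by
    intro k
    have hxk : x ∈ J ⊔ maximalIdeal A ^ k := (Submodule.mem_iInf _).mp hx k
    obtain ⟨j, hj, y, hy, rfl⟩ := Submodule.mem_sup.mp hxk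
    have h1 : (J : Submodule A A).mkQ (j + y) = (J : Submodule A A).mkQ y := by
      have hz : (J : Submodule A A).mkQ j = 0 := by
        rw [Submodule.mkQ_apply, Submodule.Quotient.mk_eq_zero]; exact hj
      rw [map_add, hz, zero_add]
    rw [h1]
    have : ((maximalIdeal A) ^ k • ⊤ : Submodule A (A ⧸ (J : Submodule A A))) =
        Submodule.map (J : Submodule A A).mkQ ((maximalIdeal A) ^ k • ⊤) := by
      rw [Submodule.map_smul'', Submodule.map_top, Submodule.range_mkQ]
    rw [this]
    refine Submodule.mem_map_of_mem ?_
    rw [smul_eq_mul, ← Ideal.one_eq_top, mul_one]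
    exact hy
  have : (J : Submodule A A).mkQ x = 0 := by
    have := (Submodule.mem_iInf _).mpr hmem
    rwa [hbot, Submodule.mem_bot] at this
  rwa [Submodule.mkQ_apply, Submodule.Quotient.mk_eq_zero] at this

end Aux

set_option maxHeartbeats 1000000

/-- Chevalley. Let `A` be a complete local Noetherian ring and
`{a_i}` a family of proper finite-colength ideals with `⋂ a_i = 0`. Then the linear
topology defined by the `a_i` coincides with the `𝔪`-adic topology: for every `n` some
finite intersection of the `a_i` is contained in `𝔪^n`, and conversely every finite
intersection contains a power of `𝔪`. -/
theorem stmt_9 {A : Type*} [CommRing A] [IsNoetherianRing A] [IsLocalRing A]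
    [IsAdicComplete (IsLocalRing.maximalIdeal A) A]
    {ι : Type*} (a : ι → Ideal A)
    (hne : ∀ i, a i ≠ ⊤)
    (hfl : ∀ i, IsFiniteLength A (A ⧸ a i))
    (hint : (⨅ i, a i) = ⊥) :
    (∀ n : ℕ, ∃ s : Finset ι, (⨅ i ∈ s, a i) ≤ (IsLocalRing.maximalIdeal A) ^ n) ∧
    (∀ s : Finset ι, ∃ n : ℕ, (IsLocalRing.maximalIdeal A) ^ n ≤ ⨅ i ∈ s, a i) := by
  classical
  set m : Ideal A := IsLocalRing.maximalIdeal A with hm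
  set J : Finset ι → Ideal A := fun s => ⨅ i ∈ s, a i with hJ
  have hJmono : ∀ {s t : Finset ι}, s ⊆ t → J t ≤ J s := by
    intro s t hst
    exact iInf_le_iInf_of_subset hst
  constructor
  · -- hard direction
    intro n
    by_contra hcon
    push_neg at hcon
    have hcon' : ∀ s : Finset ι, ¬ J s ≤ m ^ n := fun s => hcon s
    -- minimal elements
    have hmin : ∀ k : ℕ, ∃ s₀ : Finset ι, ∀ s : Finset ι,
        J s₀ ⊔ m ^ k ≤ J s ⊔ m ^ k := by
      intro k
      haveI hart : IsArtinian A (A ⧸ (m ^ k : Ideal A)) := chev_artinian_quot_pow k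
      set N : Submodule A A := (m ^ k : Ideal A) with hN
      obtain ⟨P, hPmem, hPmin⟩ := IsArtinian.set_has_minimal (R := A)
        (M := A ⧸ (m ^ k : Ideal A))
        (Set.range fun s : Finset ι => Submodule.map N.mkQ (J s ⊔ m ^ k)) ⟨_, ⟨∅, rfl⟩⟩
      obtain ⟨s₀, rfl⟩ := hPmem
      refine ⟨s₀, fun s => ?_⟩
      have hle : Submodule.map N.mkQ (J (s₀ ∪ s) ⊔ m ^ k) ≤
          Submodule.map N.mkQ (J s₀ ⊔ m ^ k) :=
        Submodule.map_mono (sup_le_sup_right (hJmono Finset.subset_union_left) _)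
      have heq : Submodule.map N.mkQ (J (s₀ ∪ s) ⊔ m ^ k) =
          Submodule.map N.mkQ (J s₀ ⊔ m ^ k) := by
        by_contra hne'
        exact hPmin _ ⟨s₀ ∪ s, rfl⟩ (lt_of_le_of_ne hle hne')
      have hle2 : Submodule.map N.mkQ (J s₀ ⊔ m ^ k) ≤
          Submodule.map N.mkQ (J s ⊔ m ^ k) := by
        rw [← heq]
        exact Submodule.map_mono (sup_le_sup_right (hJmono Finset.subset_union_right) _)
      have hcm := Submodule.comap_mono (f := N.mkQ) hle2
      rw [Submodule.comap_map_mkQ, Submodule.comap_map_mkQ] at hcm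
      have key : ∀ I : Ideal A, N ⊔ (I ⊔ m ^ k) = I ⊔ m ^ k := by
        intro I
        rw [hN, sup_comm (m ^ k) (I ⊔ m ^ k), sup_assoc, sup_idem]
      rw [key, key] at hcm
      exact hcm
    choose s₀ hs₀ using hmin
    set c : ℕ → Ideal A := fun k => J (s₀ k) ⊔ m ^ k with hc
    have hck : ∀ s k, c k ≤ J s ⊔ m ^ k := fun s k => hs₀ k s
    have hsub : ∀ k, c k ≤ c (k + 1) ⊔ m ^ k := by
      intro k
      have h1 : c k ≤ J (s₀ (k + 1)) ⊔ m ^ k := hck _ k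
      have h2 : J (s₀ (k + 1)) ⊔ m ^ k ≤ c (k + 1) ⊔ m ^ k := by
        rw [hc]
        exact sup_le_sup_right le_sup_left _
      exact le_trans h1 h2
    have hnm : ∀ k, n ≤ k → ¬ c k ≤ m ^ n := by
      intro k hk hle
      refine hcon' (s₀ k) (le_trans ?_ hle)
      exact le_sup_left
    -- build the coherent sequence
    have step : ∀ k (y : A), y ∈ c k → ∃ y', y' ∈ c (k + 1) ∧ y - y' ∈ m ^ k := by
      intro k y hy
      obtain ⟨u, hu, v, hv, huv⟩ := Submodule.mem_sup.mp (hsub k hy)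
      exact ⟨u, hu, by rw [← huv]; simpa using hv⟩
    obtain ⟨x0, hx0c, hx0m⟩ := SetLike.not_le_iff_exists.mp (hnm n le_rfl)
    let F : ∀ k : ℕ, {y : A // y ∈ c (n + k)} := fun k =>
      Nat.rec ⟨x0, hx0c⟩ (fun k p =>
        ⟨Classical.choose (step (n + k) p.1 p.2),
          (Classical.choose_spec (step (n + k) p.1 p.2)).1⟩) k
    have hFstep : ∀ k, (F k).1 - (F (k + 1)).1 ∈ m ^ (n + k) := by
      intro k
      exact (Classical.choose_spec (step (n + k) (F k).1 (F k).2)).2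
    have hFdiff' : ∀ j d : ℕ, (F j).1 - (F (j + d)).1 ∈ m ^ (n + j) := by
      intro j d
      induction d with
      | zero => simpa using Submodule.zero_mem (m ^ (n + j))
      | succ d ih =>
        have h2 : (F (j + d)).1 - (F (j + d + 1)).1 ∈ m ^ (n + j) :=
          Ideal.pow_le_pow_right (by omega) (hFstep (j + d))
        have h3 := Submodule.add_mem _ ih h2
        have h4 : (F j).1 - (F (j + d)).1 + ((F (j + d)).1 - (F (j + d + 1)).1) =
            (F j).1 - (F (j + (d + 1))).1 := sub_add_sub_cancel _ _ _
        rwa [h4] at h3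
    have hFdiff : ∀ j k, j ≤ k → (F j).1 - (F k).1 ∈ m ^ (n + j) := by
      intro j k hjk
      have := hFdiff' j (k - j)
      rwa [show j + (k - j) = k by omega] at this
    have hFnot : ∀ k, (F k).1 ∉ m ^ n := by
      intro k
      induction k with
      | zero => exact hx0m
      | succ k ih =>
        intro hmem
        refine ih ?_
        have h2 : (F k).1 - (F (k + 1)).1 ∈ m ^ n :=
          Ideal.pow_le_pow_right (Nat.le_add_right n k) (hFstep k)
        have := Submodule.add_mem _ hmem h2
        simpa using this
    -- use completeness
    have hsmul : ∀ j : ℕ, (m ^ j • ⊤ : Submodule A A) = m ^ j := by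
      intro j
      rw [smul_eq_mul, ← Ideal.one_eq_top, mul_one]
    set f : ℕ → A := fun j => (F (j - n)).1 with hf
    have hcau : ∀ {p q : ℕ}, p ≤ q → f p ≡ f q [SMOD (m ^ p • ⊤ : Submodule A A)] := by
      intro p q hpq
      rw [SModEq.sub_mem, hsmul]
      have h1 : (F (p - n)).1 - (F (q - n)).1 ∈ m ^ (n + (p - n)) :=
        hFdiff _ _ (by omega)
      exact Ideal.pow_le_pow_right (by omega) h1
    obtain ⟨L, hL⟩ := IsPrecomplete.prec (IsAdicComplete.toIsPrecomplete) hcau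
    have hLmem : ∀ j : ℕ, f j - L ∈ m ^ j := by
      intro j
      have := hL j
      rwa [SModEq.sub_mem, hsmul] at this
    have hLnot : L ∉ m ^ n := by
      intro hmem
      refine hFnot 0 ?_
      have h1 : f n - L ∈ m ^ n := hLmem n
      have h2 := Submodule.add_mem _ h1 hmem
      have : f n = (F 0).1 := by simp only [hf]; rw [Nat.sub_self]
      rw [← this]
      simpa using h2
    have hLJ : ∀ s : Finset ι, L ∈ J s := by
      intro s
      refine chev_krull (J s) ?_
      refine (Submodule.mem_iInf _).mpr fun k => ?_
      have hfj : f (max k n) ∈ c (n + (max k n - n)) := (F (max k n - n)).2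
      have hle : c (n + (max k n - n)) ≤ J s ⊔ m ^ k :=
        le_trans (hck s _) (sup_le_sup_left (Ideal.pow_le_pow_right (by omega)) _)
      have hfj' : f (max k n) ∈ J s ⊔ m ^ k := hle hfj
      have hdiff : f (max k n) - L ∈ J s ⊔ m ^ k :=
        Submodule.mem_sup_right (Ideal.pow_le_pow_right (le_max_left k n) (hLmem _))
      have := Submodule.sub_mem _ hfj' hdiff
      simpa using this
    have hLbot : L ∈ (⊥ : Ideal A) := by
      rw [← hint]
      refine (Submodule.mem_iInf _).mpr fun i => ?_
      have := hLJ {i}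
      simpa [hJ] using this
    rw [Submodule.mem_bot] at hLbot
    subst hLbot
    exact hLnot (Submodule.zero_mem _)
  · -- easy direction
    have hpow : ∀ i, ∃ t : ℕ, m ^ t ≤ a i := by
      intro i
      have hart : IsArtinian A (A ⧸ a i) :=
        (isFiniteLength_iff_isNoetherian_isArtinian.mp (hfl i)).2
      have hartring : IsArtinianRing (A ⧸ a i) := isArtinian_of_tower A hart
      obtain ⟨t, ht⟩ := IsArtinianRing.isNilpotent_jacobson_bot (R := A ⧸ a i)
      have hjac : (m.map (Ideal.Quotient.mk (a i))) ≤ Ideal.jacobson ⊥ := by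
        rw [Ideal.jacobson]
        refine le_sInf fun M' hM' => ?_
        rw [Ideal.map_le_iff_le_comap]
        have hmax : (M'.comap (Ideal.Quotient.mk (a i))).IsMaximal :=
          Ideal.comap_isMaximal_of_surjective _ Ideal.Quotient.mk_surjective (H := hM'.2)
        exact le_of_eq (hm.trans (IsLocalRing.eq_maximalIdeal hmax).symm)
      refine ⟨t, fun x hx => ?_⟩
      have h1 : (Ideal.Quotient.mk (a i)) x ∈ (m.map (Ideal.Quotient.mk (a i))) ^ t := by
        rw [← Ideal.map_pow]
        exact Ideal.mem_map_of_mem _ hx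
      have h2 : (Ideal.Quotient.mk (a i)) x ∈ ((Ideal.jacobson ⊥ : Ideal (A ⧸ a i)) ^ t) :=
        Ideal.pow_right_mono hjac t h1
      rw [ht] at h2
      rw [← Ideal.Quotient.eq_zero_iff_mem]
      simpa using h2
    choose t ht using hpow
    intro s
    refine ⟨s.sup t, ?_⟩
    refine le_iInf fun i => le_iInf fun hi => ?_
    exact le_trans (Ideal.pow_le_pow_right (Finset.le_sup hi)) (ht i)
end

section
/- Let $L$ be a field, $V$ a finite-dimensional filtered $L$-vector space with a decreasing exhaustive separated filtration $(\mathrm{Fil}^i V)_{i \in \mathbb{Z}}$, and $W \subset V$ a subspace. Say $W$ is non-critical if there exists $j \in \mathbb{Z}$ with $V = W \oplus \mathrm{Fil}^j V$. Suppose the filtration of $V$ has $n = \dim V$ distinct jumps $k_1 < k_2 < \dots < k_n$ (i.e. $\dim \mathrm{gr}^{k_i} V = 1$ for each $i$ and $\mathrm{gr}^k V = 0$ otherwise). Let $0 = F_0 \subset F_1 \subset \dots \subset F_n = V$ be a complete flag such that every $F_i$ is non-critical. Then for each $i$, the induced filtration on $F_i$ has jumps exactly $k_1, \dots, k_i$,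 and the induced filtration on $V/F_i$ has jumps exactly $k_{i+1}, \dots, k_n$. -/
/-!
Counting jumps gives `dim Fil^m = #{t | m ≤ k_t}`. A complement `Fil^c` of `F_i` has
dimension `n - i`, which forces `k_t < c` exactly for `t < i`. For `m ≤ c` we have
`F_i + Fil^m = V`, so `dim (F_i ∩ Fil^m) = dim Fil^m - dim Fil^c = #{t < i | m ≤ k_t}`, and for
`c ≤ m` the intersection is `0`, matching the same count. The image of `Fil^m` in `V / F_i` then
has dimension `#{t ≥ i | m ≤ k_t}`. Both are jump counts of a subfamily of the `k_t`, whose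
jumps are read off directly.
-/

open Module Finset Function

namespace Submodule

variable {K V : Type*} [Field K] [AddCommGroup V] [Module K V] [FiniteDimensional K V]

theorem finrank_map_mkQ_add_finrank_inf (p S : Submodule K V) :
    finrank K (S.map p.mkQ) + finrank K ↥(p ⊓ S) = finrank K S := by
  have h := LinearMap.finrank_range_add_finrank_ker (p.mkQ ∘ₗ S.subtype)
  rwa [LinearMap.range_comp, range_subtype, LinearMap.ker_comp, ker_mkQ,
    ← finrank_map_subtype_eq, map_comap_subtype, inf_comm] at h

theorem finrank_inf_add_finrank_of_isCompl_of_le {p q r : Submodule K V} (h : IsCompl p q)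
    (hqr : q ≤ r) : finrank K ↥(p ⊓ r) + finrank K q = finrank K r := by
  have hsup : p ⊔ r = ⊤ := top_le_iff.mp (h.sup_eq_top ▸ sup_le_sup_left hqr p)
  have hdim := finrank_sup_add_finrank_inf_eq p r
  have hcompl := finrank_add_eq_of_isCompl h
  rw [hsup, finrank_top] at hdim
  omega

end Submodule

section JumpCount

variable {ι : Type*} (kk : ι → ℤ) (A : Finset ι)

theorem card_filter_le_eq_card_filter_succ_le_add (m : ℤ) :
    #{s ∈ A | m ≤ kk s} = #{s ∈ A | m + 1 ≤ kk s} + #{s ∈ A | kk s = m} := by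
  rw [← card_filter_add_card_filter_not (fun s => m + 1 ≤ kk s), filter_filter,
    filter_filter]
  congr 2 <;> exact filter_congr fun s _ => by omega

theorem card_filter_lt_add_card_filter_le [Fintype ι] (c m : ℤ) :
    #{s ∈ {s | kk s < c} | m ≤ kk s} + #{s ∈ {s | c ≤ kk s} | m ≤ kk s} =
      #{s | m ≤ kk s} := by
  rw [← card_filter_add_card_filter_not (s := {s | m ≤ kk s}) (fun s => kk s < c)]
  simp only [filter_filter]
  congr 2 <;> exact filter_congr fun s _ => by omega

variable {kk A}

theorem card_filter_le_of_mem (hkk : Injective kk) {t : ι} (ht : t ∈ A) :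
    #{s ∈ A | kk t ≤ kk s} = #{s ∈ A | kk t + 1 ≤ kk s} + 1 := by
  have hfiber : {s ∈ A | kk s = kk t} = {t} := by
    ext s
    simp only [mem_filter, mem_singleton, hkk.eq_iff]
    exact ⟨And.right, fun hs => ⟨hs ▸ ht, hs⟩⟩
  rw [card_filter_le_eq_card_filter_succ_le_add, hfiber, card_singleton]

theorem card_filter_le_of_forall_ne {m : ℤ} (hm : ∀ t ∈ A, m ≠ kk t) :
    #{s ∈ A | m ≤ kk s} = #{s ∈ A | m + 1 ≤ kk s} := by
  have hfiber : {s ∈ A | kk s = m} = ∅ := filter_false_of_mem fun s hs => (hm s hs).symm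
  rw [card_filter_le_eq_card_filter_succ_le_add, hfiber, card_empty, add_zero]

end JumpCount

theorem Fin.le_apply_iff_of_card_filter {α : Type*} [LinearOrder α] {n : ℕ} {f : Fin n → α}
    (hf : Monotone f) {c : α} {i : ℕ} (hc : #{s | c ≤ f s} = n - i) (s : Fin n) :
    c ≤ f s ↔ i ≤ s := by
  constructor
  · intro hs
    have hsub : Ici s ⊆ ({s | c ≤ f s} : Finset (Fin n)) := fun s' hs' => by
      simp only [mem_Ici, mem_filter_univ] at hs' ⊢
      exact hs.trans (hf hs')
    have := card_le_card hsub
    rw [Fin.card_Ici, hc] at this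
    omega
  · intro hs
    by_contra! hlt
    have hsub : ({s | c ≤ f s} : Finset (Fin n)) ⊆ Ioi s := fun s' hs' => by
      simp only [mem_Ioi, mem_filter_univ] at hs' ⊢
      by_contra! h
      exact (hlt.trans_le' (hf h)).not_ge hs'
    have := card_le_card hsub
    rw [Fin.card_Ioi, hc] at this
    omega

section Filtration

variable {K V : Type*} [Field K] [AddCommGroup V] [Module K V]
  {ι : Type*} [Fintype ι] {Fil : ℤ → Submodule K V} {kk : ι → ℤ}

theorem finrank_filtration_eq_card (hanti : Antitone Fil) {b : ℤ} (hb : Fil b = ⊥)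
    (hkk : Injective kk)
    (hjump : ∀ i, finrank K (Fil (kk i)) = finrank K (Fil (kk i + 1)) + 1)
    (hnojump : ∀ m, (∀ i, m ≠ kk i) → Fil m = Fil (m + 1)) (m : ℤ) :
    finrank K (Fil m) = #{s | m ≤ kk s} := by
  have hbot : ∀ m, b ≤ m → Fil m = ⊥ := fun m hm => eq_bot_iff.mpr (hb ▸ hanti hm)
  have hlt : ∀ s, kk s < b := fun s => by
    by_contra! h
    have := hjump s
    rw [hbot _ h, finrank_bot] at this
    omega
  suffices h : ∀ d : ℕ, ∀ m, b ≤ m + d → finrank K (Fil m) = #{s | m ≤ kk s} from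
    h (b - m).toNat m (by omega)
  intro d
  induction d with
  | zero =>
    intro m hm
    rw [hbot m (by omega), finrank_bot, eq_comm, card_eq_zero,
      filter_eq_empty_iff]
    exact fun s _ => by have := hlt s; omega
  | succ d ih =>
    intro m hm
    by_cases hjm : ∃ t, kk t = m
    · obtain ⟨t, rfl⟩ := hjm
      rw [hjump, ih _ (by omega), card_filter_le_of_mem hkk (mem_univ t)]
    · have hne : ∀ t, m ≠ kk t := fun t h => hjm ⟨t, h.symm⟩
      rw [hnojump m hne, ih _ (by omega), card_filter_le_of_forall_ne fun t _ => hne t]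

theorem finrank_inf_filtration_eq_card (hanti : Antitone Fil)
    (hcount : ∀ m, finrank K (Fil m) = #{s | m ≤ kk s}) {p : Submodule K V} {c : ℤ}
    (hc : IsCompl p (Fil c)) [FiniteDimensional K V] (m : ℤ) :
    finrank K ↥(p ⊓ Fil m) = #{s ∈ {s | kk s < c} | m ≤ kk s} := by
  rcases le_total m c with hmc | hcm
  · have h := Submodule.finrank_inf_add_finrank_of_isCompl_of_le hc (hanti hmc)
    have hsplit := card_filter_lt_add_card_filter_le kk c m
    rw [filter_true_of_mem fun s hs => hmc.trans (mem_filter.mp hs).2] at hsplit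
    rw [hcount, hcount] at h
    omega
  · rw [(hc.disjoint.mono_right (hanti hcm)).eq_bot, finrank_bot, eq_comm, card_eq_zero,
      filter_eq_empty_iff]
    intro s hs
    have := (mem_filter.mp hs).2
    omega

theorem finrank_map_mkQ_filtration_eq_card (hanti : Antitone Fil)
    (hcount : ∀ m, finrank K (Fil m) = #{s | m ≤ kk s}) {p : Submodule K V} {c : ℤ}
    (hc : IsCompl p (Fil c)) [FiniteDimensional K V] (m : ℤ) :
    finrank K ↥((Fil m).map p.mkQ) = #{s ∈ {s | c ≤ kk s} | m ≤ kk s} := by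
  have h := Submodule.finrank_map_mkQ_add_finrank_inf p (Fil m)
  rw [finrank_inf_filtration_eq_card hanti hcount hc, hcount,
    ← card_filter_lt_add_card_filter_le kk c m] at h
  omega

end Filtration

theorem stmt_12_general {k : Type*} [Field k] {V : Type*} [AddCommGroup V] [Module k V]
    [FiniteDimensional k V] {n : ℕ} (hn : Module.finrank k V = n)
    (Fil : ℤ → Submodule k V) (hanti : Antitone Fil)
    (hsep : ∃ b : ℤ, Fil b = ⊥)
    (kk : Fin n → ℤ) (hkk : StrictMono kk)
    (hjump : ∀ i : Fin n,
      Module.finrank k (Fil (kk i)) = Module.finrank k (Fil (kk i + 1)) + 1)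
    (hnojump : ∀ m : ℤ, (∀ i : Fin n, m ≠ kk i) → Fil m = Fil (m + 1))
    (F : Fin (n + 1) → Submodule k V)
    (hFrank : ∀ i : Fin (n + 1), Module.finrank k (F i) = (i : ℕ))
    (hFnc : ∀ i : Fin (n + 1), ∃ j : ℤ, IsCompl (F i) (Fil j)) :
    (∀ i : Fin (n + 1), ∀ t : Fin n, (t : ℕ) < (i : ℕ) →
      Module.finrank k ↥(F i ⊓ Fil (kk t)) =
        Module.finrank k ↥(F i ⊓ Fil (kk t + 1)) + 1) ∧
    (∀ i : Fin (n + 1), ∀ m : ℤ, (∀ t : Fin n, (t : ℕ) < (i : ℕ) → m ≠ kk t) →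
      Module.finrank k ↥(F i ⊓ Fil m) = Module.finrank k ↥(F i ⊓ Fil (m + 1))) ∧
    (∀ i : Fin (n + 1), ∀ t : Fin n, (i : ℕ) ≤ (t : ℕ) →
      Module.finrank k ↥((Fil (kk t)).map (F i).mkQ) =
        Module.finrank k ↥((Fil (kk t + 1)).map (F i).mkQ) + 1) ∧
    (∀ i : Fin (n + 1), ∀ m : ℤ, (∀ t : Fin n, (i : ℕ) ≤ (t : ℕ) → m ≠ kk t) →
      Module.finrank k ↥((Fil m).map (F i).mkQ) =
        Module.finrank k ↥((Fil (m + 1)).map (F i).mkQ)) := by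
  obtain ⟨b, hb⟩ := hsep
  have hcount := finrank_filtration_eq_card hanti hb hkk.injective hjump hnojump
  have hranks : ∀ i : Fin (n + 1), ∀ m,
      finrank k ↥(F i ⊓ Fil m) = #{s ∈ {s : Fin n | (s : ℕ) < i} | m ≤ kk s} ∧
      finrank k ↥((Fil m).map (F i).mkQ) = #{s ∈ {s : Fin n | (i : ℕ) ≤ s} | m ≤ kk s} := by
    intro i m
    obtain ⟨c, hc⟩ := hFnc i
    have hci : ∀ s, c ≤ kk s ↔ (i : ℕ) ≤ s := by
      refine Fin.le_apply_iff_of_card_filter hkk.monotone ?_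
      have := Submodule.finrank_add_eq_of_isCompl hc
      rw [hFrank, hn, hcount] at this
      omega
    rw [finrank_inf_filtration_eq_card hanti hcount hc,
      finrank_map_mkQ_filtration_eq_card hanti hcount hc]
    constructor <;> congr 2 <;> exact filter_congr fun s _ => by simp only [← not_le, hci]
  refine ⟨fun i t ht => ?_, fun i m hm => ?_, fun i t ht => ?_, fun i m hm => ?_⟩
  · rw [(hranks i _).1, (hranks i _).1]
    exact card_filter_le_of_mem hkk.injective (by simpa using ht)
  · rw [(hranks i _).1, (hranks i _).1]
    exact card_filter_le_of_forall_ne fun t ht => hm t (by simpa using ht)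
  · rw [(hranks i _).2, (hranks i _).2]
    exact card_filter_le_of_mem hkk.injective (by simpa using ht)
  · rw [(hranks i _).2, (hranks i _).2]
    exact card_filter_le_of_forall_ne fun t ht => hm t (by simpa using ht)

/-- Let `V` be a filtered vector space whose (decreasing, exhaustive,
separated) filtration has `n = dim V` distinct jumps `k_1 < … < k_n`, each of
multiplicity one.  If `0 = F_0 ⊂ F_1 ⊂ … ⊂ F_n = V` is a complete flag all of whose
members are non-critical (admit a filtration step as complement), then the filtration
induced on each `F_i` has jumps exactly `k_1, …, k_i` and the filtration induced on
`V/F_i` has jumps exactly `k_{i+1}, …, k_n`. -/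
theorem stmt_12 {k : Type*} [Field k] {V : Type*} [AddCommGroup V] [Module k V]
    [FiniteDimensional k V] {n : ℕ} (hn : Module.finrank k V = n)
    (Fil : ℤ → Submodule k V) (hanti : Antitone Fil)
    (hexh : ∃ a : ℤ, Fil a = ⊤) (hsep : ∃ b : ℤ, Fil b = ⊥)
    (kk : Fin n → ℤ) (hkk : StrictMono kk)
    (hjump : ∀ i : Fin n,
      Module.finrank k (Fil (kk i)) = Module.finrank k (Fil (kk i + 1)) + 1)
    (hnojump : ∀ m : ℤ, (∀ i : Fin n, m ≠ kk i) → Fil m = Fil (m + 1))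
    (F : Fin (n + 1) → Submodule k V) (hFmono : Monotone F)
    (hFrank : ∀ i : Fin (n + 1), Module.finrank k (F i) = (i : ℕ))
    (hFnc : ∀ i : Fin (n + 1), ∃ j : ℤ, IsCompl (F i) (Fil j)) :
    (∀ i : Fin (n + 1), ∀ t : Fin n, (t : ℕ) < (i : ℕ) →
      Module.finrank k ↥(F i ⊓ Fil (kk t)) =
        Module.finrank k ↥(F i ⊓ Fil (kk t + 1)) + 1) ∧
    (∀ i : Fin (n + 1), ∀ m : ℤ, (∀ t : Fin n, (t : ℕ) < (i : ℕ) → m ≠ kk t) →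
      Module.finrank k ↥(F i ⊓ Fil m) = Module.finrank k ↥(F i ⊓ Fil (m + 1))) ∧
    (∀ i : Fin (n + 1), ∀ t : Fin n, (i : ℕ) ≤ (t : ℕ) →
      Module.finrank k ↥((Fil (kk t)).map (F i).mkQ) =
        Module.finrank k ↥((Fil (kk t + 1)).map (F i).mkQ) + 1) ∧
    (∀ i : Fin (n + 1), ∀ m : ℤ, (∀ t : Fin n, (i : ℕ) ≤ (t : ℕ) → m ≠ kk t) →
      Module.finrank k ↥((Fil m).map (F i).mkQ) =
        Module.finrank k ↥((Fil (m + 1)).map (F i).mkQ)) :=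
  stmt_12_general hn Fil hanti hsep kk hkk hjump hnojump F hFrank hFnc
end

section
/- Let $L$ be a field, and let $V$ be a three-dimensional filtered $\varphi$-module over $L$: a 3-dimensional $L$-vector space with an endomorphism $\varphi$ having three distinct eigenvalues $\phi, \phi', \phi'' \in L^\times$, and a filtration with three distinct jumps $k_1 < k_2 < k_3$, satisfying weak admissibility (for every $\varphi$-stable subspace $W$, $v(\det \varphi|_W) \ge \sum \text{(jumps of the induced filtration on } W)$, with equality for $W = V$, where $v$ is a fixed valuation with $v(p)=1$ and the jumps are the Hodge numbers). Assume $V$ is not the direct sum of a weakly admissible line and a weakly admissible plane. If the eigenline $L_\phi = V^{\varphi = \phi}$ is critical (i.e. $L_\phi \subset \mathrm{Fil}^{k_2} V$), then: (a) $L_\phi \ne \mathrm{Fil}^{k_3} V$; (b) no eigenline $L_{\phi'}$ with $\phi' \ne \phi$ is critical; (c) no $\varphi$-stable plane $P \subset V$ is critical (i.e. no such $P$ contains $\mathrm{Fil}^{k_3} V$). -/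
/-!
The Hodge number `tHodge` is additive on a decomposition `V = W ⊕ W'` as soon as every step of
the filtration is comparable with `W` or with `W'`, since such a step is the direct sum of its
intersections with `W` and `W'`. For an eigenline `L_i` and the complementary `φ`-stable plane
`P_i`, weak admissibility then forces `t_H(L_i) = v_i` and `t_H(P_i) = ∑_{j ≠ i} v_j`, a weakly
admissible splitting of `V`. So for every `i`, one of `Fil^{k_2}`, `Fil^{k_3}` is comparable with
neither `L_i` nor `P_i`; in each of (a), (b), (c) a dimension count produces an index for which
both are comparable.
-/

open Module

/-- The Hodge number `t_H(W)` of a subspace `W` of a filtered vector space: the sum of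
the jumps (with multiplicity) of the induced filtration, all jumps lying in `[a, b]`. -/
noncomputable def tHodge {K V : Type*} [Field K] [AddCommGroup V] [Module K V]
    (Fil : ℤ → Submodule K V) (a b : ℤ) (W : Submodule K V) : ℤ :=
  ∑ m ∈ Finset.Icc a b,
    m * ((Module.finrank K ↥(W ⊓ Fil m) : ℤ) - (Module.finrank K ↥(W ⊓ Fil (m + 1)) : ℤ))

open Submodule Relation

theorem eq_top_or_eq_or_eq_or_eq_bot {α : Type*} [Top α] [Bot α] {Fil : ℤ → α} {k₀ k₁ k₂ : ℤ}
    (h0 : ∀ m : ℤ, m ≤ k₀ → Fil m = ⊤)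
    (h1 : ∀ m : ℤ, k₀ < m → m ≤ k₁ → Fil m = Fil k₁)
    (h2 : ∀ m : ℤ, k₁ < m → m ≤ k₂ → Fil m = Fil k₂)
    (h3 : ∀ m : ℤ, k₂ < m → Fil m = ⊥) (m : ℤ) :
    Fil m = ⊤ ∨ Fil m = Fil k₁ ∨ Fil m = Fil k₂ ∨ Fil m = ⊥ := by
  rcases le_or_gt m k₀ with hm₀ | hm₀
  · exact .inl (h0 m hm₀)
  rcases le_or_gt m k₁ with hm₁ | hm₁
  · exact .inr (.inl (h1 m hm₀ hm₁))
  rcases le_or_gt m k₂ with hm₂ | hm₂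
  · exact .inr (.inr (.inl (h2 m hm₁ hm₂)))
  · exact .inr (.inr (.inr (h3 m hm₂)))

theorem Finset.exists_eq_univ_erase_of_card_add_one {α : Type*} [Fintype α] [DecidableEq α]
    {s : Finset α} (hs : s.card + 1 = Fintype.card α) : ∃ a, s = Finset.univ.erase a := by
  obtain ⟨a, ha⟩ := Finset.card_eq_one.1 (by rw [Finset.card_compl]; omega : sᶜ.card = 1)
  exact ⟨a, by rw [← Finset.compl_singleton, ← ha, compl_compl]⟩

section

variable {K V : Type*} [Field K] [AddCommGroup V] [Module K V]

theorem tHodge_add_tHodge_of_finrank_inf_add {Fil : ℤ → Submodule K V} {a c : ℤ}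
    {W W' U : Submodule K V}
    (h : ∀ m, finrank K ↥(W ⊓ Fil m) + finrank K ↥(W' ⊓ Fil m) = finrank K ↥(U ⊓ Fil m)) :
    tHodge Fil a c W + tHodge Fil a c W' = tHodge Fil a c U := by
  simp only [tHodge, ← Finset.sum_add_distrib]
  refine Finset.sum_congr rfl fun m _ => ?_
  have hm : (finrank K ↥(W ⊓ Fil m) : ℤ) + finrank K ↥(W' ⊓ Fil m) =
      finrank K ↥(U ⊓ Fil m) := by
    exact_mod_cast h m
  have hm' : (finrank K ↥(W ⊓ Fil (m + 1)) : ℤ) + finrank K ↥(W' ⊓ Fil (m + 1)) =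
      finrank K ↥(U ⊓ Fil (m + 1)) := by
    exact_mod_cast h (m + 1)
  linear_combination m * hm - m * hm'

section FiniteDimensional

variable [FiniteDimensional K V]

theorem finrank_inf_add_finrank_inf_of_symmGen {W W' F : Submodule K V} (hc : IsCompl W W')
    (hF : SymmGen (· ≤ ·) W F) :
    finrank K ↥(W ⊓ F) + finrank K ↥(W' ⊓ F) = finrank K F := by
  rcases hF with hWF | hFW
  · have hsplit : W ⊔ W' ⊓ F = F := by
      rw [← sup_inf_assoc_of_le W' hWF, hc.codisjoint.eq_top, top_inf_eq]
    have hdisj : W ⊓ (W' ⊓ F) = ⊥ :=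
      eq_bot_iff.2 (hc.disjoint.eq_bot ▸ inf_le_inf_left W inf_le_left)
    have := finrank_sup_add_finrank_inf_eq W (W' ⊓ F)
    rw [hsplit, hdisj, finrank_bot, add_zero] at this
    rw [inf_eq_left.2 hWF, this]
  · have hdisj : W' ⊓ F = ⊥ :=
      eq_bot_iff.2 (hc.symm.disjoint.eq_bot ▸ inf_le_inf_left W' hFW)
    rw [inf_eq_right.2 hFW, hdisj, finrank_bot, add_zero]

theorem tHodge_add_tHodge_of_isCompl {Fil : ℤ → Submodule K V} {a c : ℤ}
    {W W' : Submodule K V} (hc : IsCompl W W')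
    (hFil : ∀ m, SymmGen (· ≤ ·) W (Fil m) ∨ SymmGen (· ≤ ·) W' (Fil m)) :
    tHodge Fil a c W + tHodge Fil a c W' = tHodge Fil a c ⊤ := by
  refine tHodge_add_tHodge_of_finrank_inf_add fun m => ?_
  rw [top_inf_eq]
  rcases hFil m with h | h
  · exact finrank_inf_add_finrank_inf_of_symmGen hc h
  · rw [add_comm]
    exact finrank_inf_add_finrank_inf_of_symmGen hc.symm h

theorem eq_of_le_inf_of_not_le {P F L L' : Submodule K V} (hP : finrank K P = 2) (hPF : ¬ P ≤ F)
    (hL : L ≤ P ⊓ F) (hL' : L' ≤ P ⊓ F) (h1 : finrank K L = 1) (h1' : finrank K L' = 1) :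
    L = L' := by
  have hlt := finrank_lt_finrank_of_lt (inf_le_left.lt_of_ne fun h => hPF (inf_eq_left.1 h))
  rw [hP] at hlt
  exact (eq_of_le_of_finrank_le hL (by omega)).trans
    (eq_of_le_of_finrank_le hL' (by omega)).symm

end FiniteDimensional

namespace Module.Basis

variable {ι : Type*} [Fintype ι] [DecidableEq ι] (b : Basis ι K V)

theorem isCompl_span_singleton_biSup_erase (i : ι) :
    IsCompl (span K {b i}) (⨆ j ∈ Finset.univ.erase i, span K {b j}) := by
  constructor
  · simpa using b.linearIndependent.iSupIndep_span_singleton.disjoint_biSup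
      (y := ↑(Finset.univ.erase i)) (by simp)
  · rw [codisjoint_iff, ← Finset.iSup_insert (t := fun j => span K {b j}),
      Finset.insert_erase (Finset.mem_univ i)]
    simp only [Finset.mem_univ, iSup_pos, ← span_range_eq_iSup, b.span_eq]

theorem finrank_biSup_erase_add_one (i : ι) :
    finrank K ↥(⨆ j ∈ Finset.univ.erase i, span K {b j}) + 1 = Fintype.card ι := by
  have := b.finiteDimensional_of_finite
  rw [← finrank_eq_card_basis b,
    ← finrank_add_eq_of_isCompl (b.isCompl_span_singleton_biSup_erase i),
    finrank_span_singleton (b.ne_zero i), add_comm]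

theorem tHodge_eq_and_tHodge_eq_of_forall_symmGen {Fil : ℤ → Submodule K V} {a c : ℤ}
    {v : ι → ℤ}
    (hwa : ∀ S : Finset ι, tHodge Fil a c (⨆ i ∈ S, span K {b i}) ≤ ∑ i ∈ S, v i)
    (hwaeq : tHodge Fil a c ⊤ = ∑ i, v i) (i : ι)
    (hFil : ∀ m, SymmGen (· ≤ ·) (span K {b i}) (Fil m) ∨
      SymmGen (· ≤ ·) (⨆ j ∈ Finset.univ.erase i, span K {b j}) (Fil m)) :
    tHodge Fil a c (span K {b i}) = v i ∧
      tHodge Fil a c (⨆ j ∈ Finset.univ.erase i, span K {b j}) =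
        ∑ j ∈ Finset.univ.erase i, v j := by
  have := b.finiteDimensional_of_finite
  have hadd := tHodge_add_tHodge_of_isCompl (a := a) (c := c)
    (b.isCompl_span_singleton_biSup_erase i) hFil
  have hline := hwa {i}
  simp only [Finset.iSup_singleton, Finset.sum_singleton] at hline
  have hplane := hwa (Finset.univ.erase i)
  have hsum := Finset.add_sum_erase Finset.univ v (Finset.mem_univ i)
  omega

end Module.Basis

end

theorem stmt_13_general {K V : Type*} [Field K] [AddCommGroup V] [Module K V]
    (b : Basis (Fin 3) K V)
    (kk : Fin 3 → ℤ) (hk12 : kk 1 < kk 2)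
    (Fil : ℤ → Submodule K V) (hanti : Antitone Fil)
    (h0 : ∀ m : ℤ, m ≤ kk 0 → Fil m = ⊤)
    (h1 : ∀ m : ℤ, kk 0 < m → m ≤ kk 1 → Fil m = Fil (kk 1))
    (h2 : ∀ m : ℤ, kk 1 < m → m ≤ kk 2 → Fil m = Fil (kk 2))
    (h3 : ∀ m : ℤ, kk 2 < m → Fil m = ⊥)
    (hd1 : Module.finrank K ↥(Fil (kk 1)) = 2)
    (hd2 : Module.finrank K ↥(Fil (kk 2)) = 1)
    (v : Fin 3 → ℤ)
    (hwa : ∀ S : Finset (Fin 3),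
      tHodge Fil (kk 0) (kk 2) (⨆ i ∈ S, Submodule.span K {b i}) ≤ ∑ i ∈ S, v i)
    (hwaeq : tHodge Fil (kk 0) (kk 2) ⊤ = ∑ i : Fin 3, v i)
    (hindec : ¬ ∃ i : Fin 3,
      tHodge Fil (kk 0) (kk 2) (Submodule.span K {b i}) = v i ∧
      tHodge Fil (kk 0) (kk 2) (⨆ j ∈ Finset.univ.erase i, Submodule.span K {b j}) =
        ∑ j ∈ Finset.univ.erase i, v j)
    (i0 : Fin 3) (hcrit : Submodule.span K {b i0} ≤ Fil (kk 1)) :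
    (Submodule.span K {b i0} ≠ Fil (kk 2)) ∧
    (∀ i : Fin 3, i ≠ i0 → ¬ Submodule.span K {b i} ≤ Fil (kk 1)) ∧
    (∀ S : Finset (Fin 3), S.card = 2 →
      ¬ Fil (kk 2) ≤ ⨆ i ∈ S, Submodule.span K {b i}) := by
  have : FiniteDimensional K V := b.finiteDimensional_of_finite
  have hF : Fil (kk 2) ≤ Fil (kk 1) := hanti hk12.le
  have hplane (j : Fin 3) : finrank K ↥(⨆ k ∈ Finset.univ.erase j, span K {b k}) = 2 := by
    simpa using b.finrank_biSup_erase_add_one j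
  have hsplit (i : Fin 3) (hF1 : SymmGen (· ≤ ·) (span K {b i}) (Fil (kk 1)) ∨
      SymmGen (· ≤ ·) (⨆ j ∈ Finset.univ.erase i, span K {b j}) (Fil (kk 1)))
      (hF2 : SymmGen (· ≤ ·) (span K {b i}) (Fil (kk 2)) ∨
      SymmGen (· ≤ ·) (⨆ j ∈ Finset.univ.erase i, span K {b j}) (Fil (kk 2))) : False := by
    refine hindec ⟨i, b.tHodge_eq_and_tHodge_eq_of_forall_symmGen hwa hwaeq i fun m => ?_⟩
    rcases eq_top_or_eq_or_eq_or_eq_bot h0 h1 h2 h3 m with h | h | h | h <;> rw [h]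
    exacts [.inl (.of_le le_top), hF1, hF2, .inl (.of_ge bot_le)]
  have hline (i : Fin 3) : span K {b i} ≠ Fil (kk 2) := fun h =>
    hsplit i (.inl (.of_le (h.le.trans hF))) (.inl (.of_ge h.ge))
  have hplane_not_le (j : Fin 3) : ¬ ⨆ k ∈ Finset.univ.erase j, span K {b k} ≤ Fil (kk 1) :=
    fun h => hsplit j (.inr (.of_le h))
      (.inr (.of_ge ((eq_of_le_of_finrank_eq h (by rw [hplane, hd1])) ▸ hF)))
  refine ⟨hline i0, fun i hi hle => ?_, fun S hS hle => ?_⟩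
  · obtain ⟨j, hj⟩ := Finset.exists_eq_univ_erase_of_card_add_one
      (s := {i0, i}) (by rw [Finset.card_pair hi.symm, Fintype.card_fin])
    refine hplane_not_le j ?_
    rw [← hj, Finset.iSup_insert, Finset.iSup_singleton]
    exact sup_le hcrit hle
  · obtain ⟨j, rfl⟩ := Finset.exists_eq_univ_erase_of_card_add_one (by rw [hS, Fintype.card_fin])
    rcases eq_or_ne i0 j with rfl | hj
    · exact hsplit i0 (.inl (.of_le hcrit)) (.inr (.of_ge hle))
    have hL : span K {b i0} ≤ ⨆ k ∈ Finset.univ.erase j, span K {b k} :=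
      le_biSup (fun k => span K {b k}) (Finset.mem_erase.2 ⟨hj, Finset.mem_univ i0⟩)
    exact hline i0 (eq_of_le_inf_of_not_le (hplane j) (hplane_not_le j) (le_inf hL hcrit)
      (le_inf hle hF) (finrank_span_singleton (b.ne_zero i0)) hd2)

/-- Let `V` be a 3-dimensional weakly admissible filtered `φ`-module
with distinct Frobenius eigenvalues `μ_i` (eigenbasis `b`), distinct Hodge jumps
`k_1 < k_2 < k_3`, and valuations `v i = v(μ i)`.  Assume `V` is not the direct sum of a
weakly admissible line and a weakly admissible plane.  If the eigenline `L = span(b i0)`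
is critical (`L ⊆ Fil^{k_2}`), then (a) `L ≠ Fil^{k_3}`; (b) no other eigenline is
critical; (c) no `φ`-stable plane is critical. -/
theorem stmt_13 {K V : Type*} [Field K] [AddCommGroup V] [Module K V]
    (b : Basis (Fin 3) K V)
    (μ : Fin 3 → K) (hμinj : Function.Injective μ) (hμ0 : ∀ i, μ i ≠ 0)
    (φ : Module.End K V) (hφ : ∀ i, φ (b i) = μ i • b i)
    (kk : Fin 3 → ℤ) (hk01 : kk 0 < kk 1) (hk12 : kk 1 < kk 2)
    (Fil : ℤ → Submodule K V) (hanti : Antitone Fil)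
    (h0 : ∀ m : ℤ, m ≤ kk 0 → Fil m = ⊤)
    (h1 : ∀ m : ℤ, kk 0 < m → m ≤ kk 1 → Fil m = Fil (kk 1))
    (h2 : ∀ m : ℤ, kk 1 < m → m ≤ kk 2 → Fil m = Fil (kk 2))
    (h3 : ∀ m : ℤ, kk 2 < m → Fil m = ⊥)
    (hd1 : Module.finrank K ↥(Fil (kk 1)) = 2)
    (hd2 : Module.finrank K ↥(Fil (kk 2)) = 1)
    (v : Fin 3 → ℤ)
    (hwa : ∀ S : Finset (Fin 3),
      tHodge Fil (kk 0) (kk 2) (⨆ i ∈ S, Submodule.span K {b i}) ≤ ∑ i ∈ S, v i)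
    (hwaeq : tHodge Fil (kk 0) (kk 2) ⊤ = ∑ i : Fin 3, v i)
    (hindec : ¬ ∃ i : Fin 3,
      tHodge Fil (kk 0) (kk 2) (Submodule.span K {b i}) = v i ∧
      tHodge Fil (kk 0) (kk 2) (⨆ j ∈ Finset.univ.erase i, Submodule.span K {b j}) =
        ∑ j ∈ Finset.univ.erase i, v j)
    (i0 : Fin 3) (hcrit : Submodule.span K {b i0} ≤ Fil (kk 1)) :
    (Submodule.span K {b i0} ≠ Fil (kk 2)) ∧
    (∀ i : Fin 3, i ≠ i0 → ¬ Submodule.span K {b i} ≤ Fil (kk 1)) ∧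
    (∀ S : Finset (Fin 3), S.card = 2 →
      ¬ Fil (kk 2) ≤ ⨆ i ∈ S, Submodule.span K {b i}) :=
  stmt_13_general b kk hk12 Fil hanti h0 h1 h2 h3 hd1 hd2 v hwa hwaeq hindec i0 hcrit
end

section
/- Let $V$ be a three-dimensional weakly admissible filtered $\varphi$-module over a field $L$, with three distinct Frobenius eigenvalues and three distinct Hodge jumps, which is indecomposable (not a direct sum of a weakly admissible line and a weakly admissible plane). Label the refinements of $V$ by orderings of the three eigenvalues $\{\phi, \phi', \phi''\}$; a refinement $(\varphi_1, \varphi_2, \varphi_3)$ is non-critical if the flag $L_{\varphi_1} \subset L_{\varphi_1} \oplus L_{\varphi_2} \subset V$ is in general position relative to the Hodge filtration. Then $V$ admits a nested sequence of non-critical refinements: there exist three refinements $\mathcal{F}_0, \mathcal{F}_1, \mathcal{F}_2$, each non-critical, with $\mathcal{F}_1 = c_1 \mathcal{F}_0$ and $\mathcal{F}_2 = c_2 \mathcal{F}_1$ for ordered cycles $c_1$ on $\{1,2,3\}$ and $c_2$ on a 2-element subinterval, forming a nested sequence of permutations in $\mathfrak{S}_3$. -/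
open Module

/-- The two ordered cycles on a subset `I` of `Fin n`. -/
def orderedCyclesFin {n : ℕ} (I : Finset (Fin n)) : Set (Equiv.Perm (Fin n)) :=
  {(I.sort (· ≤ ·)).formPerm, ((I.sort (· ≤ ·)).reverse).formPerm}

/-- `{y, ystar} = {min I, max I}`. -/
def IsMinMaxPairFin {n : ℕ} (I : Finset (Fin n)) (y ystar : Fin n) : Prop :=
  (IsLeast (↑I : Set (Fin n)) y ∧ IsGreatest (↑I : Set (Fin n)) ystar) ∨
  (IsGreatest (↑I : Set (Fin n)) y ∧ IsLeast (↑I : Set (Fin n)) ystar)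

/-- A nested sequence of permutations `σ_0 = id, σ_1, …, σ_{n-1}` of `Fin n`. -/
def IsNestedPermSeq (n : ℕ) (σ : ℕ → Equiv.Perm (Fin n)) : Prop :=
  σ 0 = 1 ∧ ∃ I : ℕ → Finset (Fin n), I 0 = Finset.univ ∧
    ∀ i : ℕ, 1 ≤ i → i ≤ n - 1 →
      ∃ y ystar : Fin n, ∃ c : Equiv.Perm (Fin n),
        IsMinMaxPairFin (I (i - 1)) y ystar ∧
        I i = (I (i - 1)).erase y ∧
        c ∈ orderedCyclesFin (I (i - 1)) ∧ c ystar = y ∧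
        σ i = c * σ (i - 1)

/-- The refinement of a 3-dimensional filtered `φ`-module given by the ordering
`(μ (τ 0), μ (τ 1), μ (τ 2))` of the eigenvalues is non-critical: the associated
`φ`-stable flag is in general position relative to the Hodge filtration. -/
def RefNonCritical {K V : Type*} [Field K] [AddCommGroup V] [Module K V]
    (b : Fin 3 → V) (Fil : ℤ → Submodule K V) (kk : Fin 3 → ℤ)
    (τ : Equiv.Perm (Fin 3)) : Prop :=
  IsCompl (Submodule.span K {b (τ 0)}) (Fil (kk 1)) ∧
  IsCompl (Submodule.span K {b (τ 0)} ⊔ Submodule.span K {b (τ 1)}) (Fil (kk 2))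

/-!
Write `F₁ ⊃ F₂` for the Hodge plane and line, and `P k` for the `φ`-stable plane spanned by the
eigenvectors other than `b k`; the refinement `τ` is non-critical iff `b (τ 0) ∉ F₁` and
`F₂ ⊄ P (τ 2)`. As `t_H(L) + t_H(P) ≤ t_H(V)` for `V = L ⊕ P`, with equality iff the filtration
splits along `L ⊕ P`, weak admissibility and indecomposability forbid every splitting
`V = ⟨b i⟩ ⊕ P i`. Dimension counting then shows that either no eigenvector lies in `F₁` and at
most one `P k` contains `F₂`, or no `P k` contains `F₂` and at most one eigenvector lies in `F₁`.
Along `id, (3 2 1), (1 2)(3 2 1)` the planes `P (τ 2)` run through only two of the three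
stable planes, and along `id, (1 2 3), (2 3)(1 2 3)` the lines `b (τ 0)` through only two of the
three eigenvectors, so a suitable starting ordering avoids the critical one.
-/

open Submodule

namespace Submodule

variable {K V : Type*} [Field K] [AddCommGroup V] [Module K V] [FiniteDimensional K V]

theorem disjoint_of_finrank_eq_one {W U : Submodule K V} (hW : finrank K W = 1) (h : ¬W ≤ U) :
    Disjoint W U := by
  rw [disjoint_iff, ← finrank_eq_zero]
  have := finrank_lt_finrank_of_lt (inf_lt_left.mpr h)
  omega

theorem isCompl_of_finrank_eq_one {W U : Submodule K V} (hW : finrank K W = 1) (h : ¬W ≤ U)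
    (hU : finrank K U + 1 = finrank K V) : IsCompl W U :=
  (isCompl_iff_disjoint _ _ (by omega)).mpr (disjoint_of_finrank_eq_one hW h)

theorem finrank_add_finrank_le_finrank_add_finrank_inf (W U : Submodule K V) :
    finrank K W + finrank K U ≤ finrank K V + finrank K ↥(W ⊓ U) := by
  rw [← finrank_sup_add_finrank_inf_eq]
  exact Nat.add_le_add_right (finrank_le _) _

end Submodule

namespace Module.Basis

variable {ι R M : Type*} [Ring R] [AddCommGroup M] [Module R M] (b : Basis ι R M)

theorem span_image_inf_span_image (s t : Set ι) :
    span R (b '' s) ⊓ span R (b '' t) = span R (b '' (s ∩ t)) := by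
  ext x
  simp only [mem_inf, b.mem_span_image, Set.subset_inter_iff]

theorem isCompl_span_singleton_span_image_compl (i : ι) :
    IsCompl (R ∙ b i) (span R (b '' {i}ᶜ)) := by
  simpa using b.linearIndependent.isCompl_span_image b.span_eq (isCompl_compl (x := {i}))

theorem iSup_span_singleton_eq_span_image (s : Finset ι) :
    ⨆ i ∈ s, R ∙ b i = span R (b '' s) := by
  rw [Set.image_eq_iUnion, span_iUnion₂]
  rfl

end Module.Basis

/-- For `W ⊓ W' = ⊥`, this says `F = (W ⊓ F) ⊕ (W' ⊓ F)` for both steps `F = F₁, F₂` of the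
filtration. -/
def SplitsAlong {K V : Type*} [Field K] [AddCommGroup V] [Module K V]
    (F₁ F₂ W W' : Submodule K V) : Prop :=
  finrank K F₁ ≤ finrank K ↥(W ⊓ F₁) + finrank K ↥(W' ⊓ F₁) ∧
    finrank K F₂ ≤ finrank K ↥(W ⊓ F₂) + finrank K ↥(W' ⊓ F₂)

section HodgeNumber

variable {K V : Type*} [Field K] [AddCommGroup V] [Module K V] {Fil : ℤ → Submodule K V}
  {k₀ k₁ k₂ : ℤ}

theorem tHodge_eq (hk01 : k₀ < k₁) (hk12 : k₁ < k₂)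
    (h0 : ∀ m : ℤ, m ≤ k₀ → Fil m = ⊤)
    (h1 : ∀ m : ℤ, k₀ < m → m ≤ k₁ → Fil m = Fil k₁)
    (h2 : ∀ m : ℤ, k₁ < m → m ≤ k₂ → Fil m = Fil k₂)
    (h3 : ∀ m : ℤ, k₂ < m → Fil m = ⊥) (W : Submodule K V) :
    tHodge Fil k₀ k₂ W = k₀ * finrank K W + (k₁ - k₀) * finrank K ↥(W ⊓ Fil k₁) +
      (k₂ - k₁) * finrank K ↥(W ⊓ Fil k₂) := by
  have hjumps : ({k₀, k₁, k₂} : Finset ℤ) ⊆ Finset.Icc k₀ k₂ := by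
    intro m hm
    simp only [Finset.mem_insert, Finset.mem_singleton] at hm
    rcases hm with rfl | rfl | rfl <;> simp only [Finset.mem_Icc] <;> omega
  have hconst : ∀ m ∈ Finset.Icc k₀ k₂, m ∉ ({k₀, k₁, k₂} : Finset ℤ) →
      m * ((finrank K ↥(W ⊓ Fil m) : ℤ) - finrank K ↥(W ⊓ Fil (m + 1))) = 0 := by
    intro m hm hjump
    simp only [Finset.mem_Icc] at hm
    simp only [Finset.mem_insert, Finset.mem_singleton, not_or] at hjump
    have : Fil m = Fil (m + 1) := by
      rcases le_or_gt m k₁ with h | h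
      · rw [h1 m (by omega) h, h1 (m + 1) (by omega) (by omega)]
      · rw [h2 m h (by omega), h2 (m + 1) (by omega) (by omega)]
    rw [this, sub_self, mul_zero]
  rw [tHodge, ← Finset.sum_subset hjumps hconst, Finset.sum_insert (by simp; omega),
    Finset.sum_insert (by simp; omega), Finset.sum_singleton, h0 k₀ le_rfl,
    h1 (k₀ + 1) (by omega) (by omega), h2 (k₁ + 1) (by omega) (by omega), h3 (k₂ + 1) (by omega),
    inf_top_eq, inf_bot_eq, finrank_bot]
  push_cast
  ring

theorem tHodge_top_le_add [FiniteDimensional K V] (hk01 : k₀ < k₁) (hk12 : k₁ < k₂)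
    (h0 : ∀ m : ℤ, m ≤ k₀ → Fil m = ⊤)
    (h1 : ∀ m : ℤ, k₀ < m → m ≤ k₁ → Fil m = Fil k₁)
    (h2 : ∀ m : ℤ, k₁ < m → m ≤ k₂ → Fil m = Fil k₂)
    (h3 : ∀ m : ℤ, k₂ < m → Fil m = ⊥) {W W' : Submodule K V} (hWW' : IsCompl W W')
    (hsplit : SplitsAlong (Fil k₁) (Fil k₂) W W') :
    tHodge Fil k₀ k₂ ⊤ ≤ tHodge Fil k₀ k₂ W + tHodge Fil k₀ k₂ W' := by
  rw [tHodge_eq hk01 hk12 h0 h1 h2 h3, tHodge_eq hk01 hk12 h0 h1 h2 h3,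
    tHodge_eq hk01 hk12 h0 h1 h2 h3, top_inf_eq, top_inf_eq, finrank_top,
    ← finrank_add_eq_of_isCompl hWW']
  obtain ⟨hs₁, hs₂⟩ := hsplit
  zify at hs₁ hs₂
  push_cast
  linarith [mul_le_mul_of_nonneg_left hs₁ (sub_nonneg.2 hk01.le),
    mul_le_mul_of_nonneg_left hs₂ (sub_nonneg.2 hk12.le)]

end HodgeNumber

theorem Fin.exists_eq_or_eq_or_eq {i j : Fin 3} (hij : i ≠ j) :
    ∃ k, ∀ l, l = k ∨ l = i ∨ l = j := by
  revert i j
  decide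

section Criticality

open Equiv

variable {K V : Type*} [Field K] [AddCommGroup V] [Module K V]

namespace Module.Basis

theorem finrank_eq_three (b : Basis (Fin 3) K V) : finrank K V = 3 := by
  rw [finrank_eq_card_basis b, Fintype.card_fin]

variable (b : Basis (Fin 3) K V)

theorem span_image_compl_apply_two (τ : Perm (Fin 3)) :
    span K (b '' {τ 2}ᶜ) = (K ∙ b (τ 0)) ⊔ (K ∙ b (τ 1)) := by
  have : ({τ 2}ᶜ : Set (Fin 3)) = {τ 0, τ 1} := by
    ext l
    obtain ⟨m, rfl⟩ := τ.surjective l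
    fin_cases m <;> simp [τ.injective.eq_iff]
  rw [this, Set.image_pair, span_insert]

variable [FiniteDimensional K V]

theorem finrank_span_image_compl (i : Fin 3) : finrank K (span K (b '' {i}ᶜ)) = 2 := by
  have := finrank_add_eq_of_isCompl (b.isCompl_span_singleton_span_image_compl i)
  rw [finrank_span_singleton (b.ne_zero i), b.finrank_eq_three] at this
  omega

end Module.Basis

variable (b : Basis (Fin 3) K V) [FiniteDimensional K V] {F₁ F₂ : Submodule K V}

theorem basis_notMem_fil₂ (hF : F₂ ≤ F₁) (hd2 : finrank K F₂ = 1)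
    (hsplit : ∀ i, ¬SplitsAlong F₁ F₂ (K ∙ b i) (span K (b '' {i}ᶜ))) (i : Fin 3) :
    b i ∉ F₂ := by
  intro hi
  have hline : ∀ F, F₂ ≤ F → (K ∙ b i) ⊓ F = K ∙ b i :=
    fun F hF₂ => inf_eq_left.2 ((span_singleton_le_iff_mem _ _).2 (hF₂ hi))
  have hP := finrank_add_finrank_le_finrank_add_finrank_inf (span K (b '' {i}ᶜ)) F₁
  rw [b.finrank_span_image_compl, b.finrank_eq_three] at hP
  refine hsplit i ⟨?_, ?_⟩
  · rw [hline _ hF, finrank_span_singleton (b.ne_zero i)]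
    omega
  · rw [hline _ le_rfl, finrank_span_singleton (b.ne_zero i)]
    omega

theorem not_span_image_compl_le (hF : F₂ ≤ F₁) (hd1 : finrank K F₁ = 2)
    (hsplit : ∀ i, ¬SplitsAlong F₁ F₂ (K ∙ b i) (span K (b '' {i}ᶜ))) (k : Fin 3) :
    ¬span K (b '' {k}ᶜ) ≤ F₁ := by
  intro hle
  have hP : span K (b '' {k}ᶜ) = F₁ :=
    eq_of_le_of_finrank_eq hle (by rw [b.finrank_span_image_compl, hd1])
  refine hsplit k ⟨?_, ?_⟩
  · rw [hP, inf_idem]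
    omega
  · rw [inf_eq_right.2 (hF.trans hP.ge)]
    omega

theorem exists_forall_basis_mem_eq (hF : F₂ ≤ F₁) (hd1 : finrank K F₁ = 2)
    (hsplit : ∀ i, ¬SplitsAlong F₁ F₂ (K ∙ b i) (span K (b '' {i}ᶜ))) :
    ∃ c, ∀ i, b i ∈ F₁ → i = c := by
  by_cases h : ∃ c, b c ∈ F₁
  · obtain ⟨c, hc⟩ := h
    refine ⟨c, fun i hi => by_contra fun hic => ?_⟩
    obtain ⟨k, hk⟩ := Fin.exists_eq_or_eq_or_eq hic
    apply not_span_image_compl_le b hF hd1 hsplit k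
    rw [span_le]
    rintro _ ⟨l, hl, rfl⟩
    rcases hk l with rfl | rfl | rfl
    exacts [absurd rfl hl, hi, hc]
  · exact ⟨0, fun i hi => (h ⟨i, hi⟩).elim⟩

theorem basis_notMem_fil₁_of_le (hF : F₂ ≤ F₁) (hd1 : finrank K F₁ = 2)
    (hd2 : finrank K F₂ = 1) (hsplit : ∀ i, ¬SplitsAlong F₁ F₂ (K ∙ b i) (span K (b '' {i}ᶜ)))
    {k : Fin 3} (hk : F₂ ≤ span K (b '' {k}ᶜ)) (c : Fin 3) : b c ∉ F₁ := by
  intro hc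
  have hcF₁ : K ∙ b c ≤ F₁ := (span_singleton_le_iff_mem _ _).2 hc
  by_cases hck : c = k
  · subst hck
    have hP := finrank_add_finrank_le_finrank_add_finrank_inf (span K (b '' {c}ᶜ)) F₁
    rw [b.finrank_span_image_compl, hd1, b.finrank_eq_three] at hP
    refine hsplit c ⟨?_, ?_⟩
    · rw [inf_eq_left.2 hcF₁, finrank_span_singleton (b.ne_zero c)]
      omega
    · rw [inf_eq_right.2 hk]
      omega
  · have hF₁ : F₂ ⊔ K ∙ b c = F₁ := eq_of_le_of_finrank_eq (sup_le hF hcF₁)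
      (by rw [finrank_sup_span_singleton (basis_notMem_fil₂ b hF hd2 hsplit c), hd2, hd1])
    have hcP : K ∙ b c ≤ span K (b '' {k}ᶜ) :=
      (span_singleton_le_iff_mem _ _).2 (subset_span ⟨c, hck, rfl⟩)
    apply not_span_image_compl_le b hF hd1 hsplit k
    exact (eq_of_le_of_finrank_eq (hF₁ ▸ sup_le hk hcP)
      (by rw [hd1, b.finrank_span_image_compl])).ge

theorem eq_of_le_span_image_compl (hF : F₂ ≤ F₁) (hd2 : finrank K F₂ = 1)
    (hsplit : ∀ i, ¬SplitsAlong F₁ F₂ (K ∙ b i) (span K (b '' {i}ᶜ)))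
    {j k : Fin 3} (hj : F₂ ≤ span K (b '' {j}ᶜ)) (hk : F₂ ≤ span K (b '' {k}ᶜ)) : j = k := by
  by_contra hjk
  obtain ⟨i, hi⟩ := Fin.exists_eq_or_eq_or_eq hjk
  have hle : F₂ ≤ K ∙ b i := by
    refine (le_inf hj hk).trans ?_
    rw [b.span_image_inf_span_image, ← Set.image_singleton]
    refine span_mono (Set.image_mono fun l ⟨hlj, hlk⟩ => ?_)
    rcases hi l with h | h | h
    exacts [h, absurd h hlj, absurd h hlk]
  apply basis_notMem_fil₂ b hF hd2 hsplit i
  rw [eq_of_le_of_finrank_eq hle (by rw [hd2, finrank_span_singleton (b.ne_zero i)])]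
  exact mem_span_singleton_self _

theorem refNonCritical_of_notMem_of_not_le {Fil : ℤ → Submodule K V} {kk : Fin 3 → ℤ}
    (hd1 : finrank K (Fil (kk 1)) = 2) (hd2 : finrank K (Fil (kk 2)) = 1) {τ : Perm (Fin 3)}
    (h₀ : b (τ 0) ∉ Fil (kk 1)) (h₂ : ¬Fil (kk 2) ≤ span K (b '' {τ 2}ᶜ)) :
    RefNonCritical (fun j => b j) Fil kk τ := by
  refine ⟨isCompl_of_finrank_eq_one (finrank_span_singleton (b.ne_zero _))
    (by rwa [span_singleton_le_iff_mem]) (by rw [hd1, b.finrank_eq_three]), ?_⟩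
  rw [← b.span_image_compl_apply_two]
  exact (isCompl_of_finrank_eq_one hd2 h₂
    (by rw [b.finrank_span_image_compl, b.finrank_eq_three])).symm

end Criticality

section NestedSequences

open Equiv

theorem Finset.sort_eq_of_mem_iff {α : Type*} [LinearOrder α] {s : Finset α} {l : List α}
    (hl : l.SortedLT) (h : ∀ a, a ∈ s ↔ a ∈ l) : s.sort (· ≤ ·) = l :=
  (Finset.sortedLT_sort s).eq_of_mem_iff hl (by simpa using h)

theorem formPerm_mem_orderedCyclesFin {n : ℕ} {I : Finset (Fin n)} {l : List (Fin n)}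
    (hl : l.SortedLT) (h : ∀ a, a ∈ I ↔ a ∈ l) :
    l.formPerm ∈ orderedCyclesFin I ∧ l.reverse.formPerm ∈ orderedCyclesFin I := by
  rw [orderedCyclesFin, Finset.sort_eq_of_mem_iff hl h]
  exact ⟨Or.inl rfl, Or.inr rfl⟩

theorem isMinMaxPairFin_iff {n : ℕ} (I : Finset (Fin n)) (y ystar : Fin n) :
    IsMinMaxPairFin I y ystar ↔
      (y ∈ I ∧ ystar ∈ I) ∧ ((∀ x ∈ I, y ≤ x ∧ x ≤ ystar) ∨ (∀ x ∈ I, ystar ≤ x ∧ x ≤ y)) := by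
  simp only [IsMinMaxPairFin, IsLeast, IsGreatest, mem_lowerBounds, mem_upperBounds,
    Finset.mem_coe]
  constructor
  · rintro (⟨⟨hy, hy'⟩, hys, hys'⟩ | ⟨⟨hy, hy'⟩, hys, hys'⟩)
    · exact ⟨⟨hy, hys⟩, Or.inl fun x hx => ⟨hy' x hx, hys' x hx⟩⟩
    · exact ⟨⟨hy, hys⟩, Or.inr fun x hx => ⟨hys' x hx, hy' x hx⟩⟩
  · rintro ⟨⟨hy, hys⟩, h | h⟩
    · exact Or.inl ⟨⟨hy, fun x hx => (h x hx).1⟩, hys, fun x hx => (h x hx).2⟩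
    · exact Or.inr ⟨⟨hy, fun x hx => (h x hx).2⟩, hys, fun x hx => (h x hx).1⟩

/-- `id, (1 2 3), (2 3)(1 2 3)` in the paper's numbering. -/
def ascNestedSeq : ℕ → Perm (Fin 3)
  | 0 => 1
  | 1 => [0, 1, 2].formPerm
  | _ => [1, 2].formPerm * [0, 1, 2].formPerm

/-- `id, (3 2 1), (1 2)(3 2 1)` in the paper's numbering. -/
def descNestedSeq : ℕ → Perm (Fin 3)
  | 0 => 1
  | 1 => [2, 1, 0].formPerm
  | _ => [0, 1].formPerm * [2, 1, 0].formPerm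

theorem isNestedPermSeq_ascNestedSeq : IsNestedPermSeq 3 ascNestedSeq := by
  refine ⟨rfl, fun n => Finset.univ.filter (n ≤ ·.val), by decide, fun i hi₁ hi₂ => ?_⟩
  interval_cases i
  · exact ⟨0, 2, [0, 1, 2].formPerm, (isMinMaxPairFin_iff _ _ _).2 (by decide), by decide,
      (formPerm_mem_orderedCyclesFin (by decide) (by decide)).1, by decide, rfl⟩
  · exact ⟨1, 2, [1, 2].formPerm, (isMinMaxPairFin_iff _ _ _).2 (by decide), by decide,
      (formPerm_mem_orderedCyclesFin (by decide) (by decide)).1, by decide, rfl⟩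

theorem isNestedPermSeq_descNestedSeq : IsNestedPermSeq 3 descNestedSeq := by
  refine ⟨rfl, fun n => Finset.univ.filter (·.val + n ≤ 2), by decide, fun i hi₁ hi₂ => ?_⟩
  interval_cases i
  · exact ⟨2, 0, [2, 1, 0].formPerm, (isMinMaxPairFin_iff _ _ _).2 (by decide), by decide,
      (formPerm_mem_orderedCyclesFin (l := [0, 1, 2]) (by decide) (by decide)).2, by decide, rfl⟩
  · exact ⟨1, 0, [0, 1].formPerm, (isMinMaxPairFin_iff _ _ _).2 (by decide), by decide,
      (formPerm_mem_orderedCyclesFin (by decide) (by decide)).1, by decide, rfl⟩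

theorem exists_forall_ascNestedSeq_apply_zero_ne (c : Fin 3) :
    ∃ τ₀ : Perm (Fin 3), ∀ n ≤ 2, (τ₀ * (ascNestedSeq n)⁻¹) 0 ≠ c := by
  revert c
  decide

theorem exists_forall_descNestedSeq_apply_two_ne (k : Fin 3) :
    ∃ τ₀ : Perm (Fin 3), ∀ n ≤ 2, (τ₀ * (descNestedSeq n)⁻¹) 2 ≠ k := by
  revert k
  decide

end NestedSequences

theorem stmt_14_general {K V : Type*} [Field K] [AddCommGroup V] [Module K V]
    (b : Basis (Fin 3) K V)
    (kk : Fin 3 → ℤ) (hk01 : kk 0 < kk 1) (hk12 : kk 1 < kk 2)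
    (Fil : ℤ → Submodule K V) (hanti : Antitone Fil)
    (h0 : ∀ m : ℤ, m ≤ kk 0 → Fil m = ⊤)
    (h1 : ∀ m : ℤ, kk 0 < m → m ≤ kk 1 → Fil m = Fil (kk 1))
    (h2 : ∀ m : ℤ, kk 1 < m → m ≤ kk 2 → Fil m = Fil (kk 2))
    (h3 : ∀ m : ℤ, kk 2 < m → Fil m = ⊥)
    (hd1 : Module.finrank K ↥(Fil (kk 1)) = 2)
    (hd2 : Module.finrank K ↥(Fil (kk 2)) = 1)
    (v : Fin 3 → ℤ)
    (hwa : ∀ S : Finset (Fin 3),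
      tHodge Fil (kk 0) (kk 2) (⨆ i ∈ S, Submodule.span K {b i}) ≤ ∑ i ∈ S, v i)
    (hwaeq : tHodge Fil (kk 0) (kk 2) ⊤ = ∑ i : Fin 3, v i)
    (hindec : ¬ ∃ i : Fin 3,
      tHodge Fil (kk 0) (kk 2) (Submodule.span K {b i}) = v i ∧
      tHodge Fil (kk 0) (kk 2) (⨆ j ∈ Finset.univ.erase i, Submodule.span K {b j}) =
        ∑ j ∈ Finset.univ.erase i, v j) :
    ∃ τ0 : Equiv.Perm (Fin 3), ∃ σ : ℕ → Equiv.Perm (Fin 3),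
      IsNestedPermSeq 3 σ ∧
      ∀ i : ℕ, i ≤ 2 → RefNonCritical (fun j => b j) Fil kk (τ0 * (σ i)⁻¹) := by
  have : FiniteDimensional K V := Module.Finite.of_basis b
  have hF : Fil (kk 2) ≤ Fil (kk 1) := hanti hk12.le
  have hsplit : ∀ i, ¬SplitsAlong (Fil (kk 1)) (Fil (kk 2)) (K ∙ b i) (span K (b '' {i}ᶜ)) := by
    intro i hs
    have hle := tHodge_top_le_add hk01 hk12 h0 h1 h2 h3
      (b.isCompl_span_singleton_span_image_compl i) hs
    have hline := hwa {i}
    have hplane := hwa (Finset.univ.erase i)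
    simp only [b.iSup_span_singleton_eq_span_image, Finset.coe_singleton, Set.image_singleton,
      Finset.sum_singleton, Finset.coe_erase, Finset.coe_univ, ← Set.compl_eq_univ_sdiff]
      at hline hplane hindec
    rw [← Finset.add_sum_erase _ _ (Finset.mem_univ i)] at hwaeq
    exact hindec ⟨i, by linarith, by linarith⟩
  by_cases hP : ∃ k, Fil (kk 2) ≤ span K (b '' {k}ᶜ)
  · obtain ⟨k, hk⟩ := hP
    obtain ⟨τ₀, hτ₀⟩ := exists_forall_descNestedSeq_apply_two_ne k
    refine ⟨τ₀, descNestedSeq, isNestedPermSeq_descNestedSeq, fun n hn => ?_⟩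
    exact refNonCritical_of_notMem_of_not_le b hd1 hd2
      (basis_notMem_fil₁_of_le b hF hd1 hd2 hsplit hk _)
      fun h => hτ₀ n hn (eq_of_le_span_image_compl b hF hd2 hsplit h hk)
  · obtain ⟨c, hc⟩ := exists_forall_basis_mem_eq b hF hd1 hsplit
    obtain ⟨τ₀, hτ₀⟩ := exists_forall_ascNestedSeq_apply_zero_ne c
    refine ⟨τ₀, ascNestedSeq, isNestedPermSeq_ascNestedSeq, fun n hn => ?_⟩
    exact refNonCritical_of_notMem_of_not_le b hd1 hd2 (fun h => hτ₀ n hn (hc _ h))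
      fun h => hP ⟨_, h⟩

/-- A 3-dimensional indecomposable weakly admissible filtered
`φ`-module with distinct Frobenius eigenvalues and distinct Hodge jumps admits a nested
sequence of non-critical refinements: there are refinements `𝓕_0, 𝓕_1, 𝓕_2`, each
non-critical, related by a nested sequence of permutations in `𝔖_3`. -/
theorem stmt_14 {K V : Type*} [Field K] [AddCommGroup V] [Module K V]
    (b : Basis (Fin 3) K V)
    (μ : Fin 3 → K) (hμinj : Function.Injective μ) (hμ0 : ∀ i, μ i ≠ 0)
    (φ : Module.End K V) (hφ : ∀ i, φ (b i) = μ i • b i)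
    (kk : Fin 3 → ℤ) (hk01 : kk 0 < kk 1) (hk12 : kk 1 < kk 2)
    (Fil : ℤ → Submodule K V) (hanti : Antitone Fil)
    (h0 : ∀ m : ℤ, m ≤ kk 0 → Fil m = ⊤)
    (h1 : ∀ m : ℤ, kk 0 < m → m ≤ kk 1 → Fil m = Fil (kk 1))
    (h2 : ∀ m : ℤ, kk 1 < m → m ≤ kk 2 → Fil m = Fil (kk 2))
    (h3 : ∀ m : ℤ, kk 2 < m → Fil m = ⊥)
    (hd1 : Module.finrank K ↥(Fil (kk 1)) = 2)
    (hd2 : Module.finrank K ↥(Fil (kk 2)) = 1)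
    (v : Fin 3 → ℤ)
    (hwa : ∀ S : Finset (Fin 3),
      tHodge Fil (kk 0) (kk 2) (⨆ i ∈ S, Submodule.span K {b i}) ≤ ∑ i ∈ S, v i)
    (hwaeq : tHodge Fil (kk 0) (kk 2) ⊤ = ∑ i : Fin 3, v i)
    (hindec : ¬ ∃ i : Fin 3,
      tHodge Fil (kk 0) (kk 2) (Submodule.span K {b i}) = v i ∧
      tHodge Fil (kk 0) (kk 2) (⨆ j ∈ Finset.univ.erase i, Submodule.span K {b j}) =
        ∑ j ∈ Finset.univ.erase i, v j) :
    ∃ τ0 : Equiv.Perm (Fin 3), ∃ σ : ℕ → Equiv.Perm (Fin 3),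
      IsNestedPermSeq 3 σ ∧
      ∀ i : ℕ, i ≤ 2 → RefNonCritical (fun j => b j) Fil kk (τ0 * (σ i)⁻¹) :=
  stmt_14_general b kk hk01 hk12 Fil hanti h0 h1 h2 h3 hd1 hd2 v hwa hwaeq hindec
end
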